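/- arXiv:2108.07193 — 9 statements merged into one kernel-verified Lean document; each statement's English description precedes it below -/
import Mathlib

section
/- Let z₁,…,z_k ∈ ℝⁿ and let x, y ∈ ℝⁿ satisfy ‖x − zᵢ‖ ≤ ‖y − zᵢ‖ for every i = 1,…,k. Then ‖x − z‖ ≤ ‖y − z‖ for every z in the convex hull of {z₁,…,z_k}. In particular, if y itself belongs to the convex hull of {z₁,…,z_k}, then x = y. -/
/-!
In an inner product space, `‖x - w‖ ≤ ‖y - w‖` expands to the linear condition
`2 ⟪y - x, w⟫ ≤ ‖y‖² - ‖x‖²` on `w`: the points at least as close to `x` as to `y` form a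
closed half-space, which is convex and therefore contains the convex hull of any of its subsets.
Taking `w = y` gives `‖x - y‖ ≤ 0`.
-/

open RealInnerProductSpace

section

variable {F : Type*} [NormedAddCommGroup F] [InnerProductSpace ℝ F]

theorem norm_sub_le_norm_sub_iff_two_inner_le (x y w : F) :
    ‖x - w‖ ≤ ‖y - w‖ ↔ 2 * ⟪y - x, w⟫ ≤ ‖y‖ ^ 2 - ‖x‖ ^ 2 := by
  rw [← sq_le_sq₀ (norm_nonneg _) (norm_nonneg _), norm_sub_sq_real, norm_sub_sq_real,
    inner_sub_left]
  constructor <;> intro h <;> linarith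

theorem convex_setOf_norm_sub_le_norm_sub (x y : F) :
    Convex ℝ {w : F | ‖x - w‖ ≤ ‖y - w‖} := by
  simp_rw [norm_sub_le_norm_sub_iff_two_inner_le]
  refine convex_halfSpace_le ⟨fun a b => ?_, fun c a => ?_⟩ _
  · rw [inner_add_right, mul_add]
  · rw [real_inner_smul_right, smul_eq_mul, mul_left_comm]

theorem norm_sub_le_norm_sub_of_mem_convexHull {s : Set F} {x y w : F}
    (h : ∀ z ∈ s, ‖x - z‖ ≤ ‖y - z‖) (hw : w ∈ convexHull ℝ s) :
    ‖x - w‖ ≤ ‖y - w‖ :=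
  convexHull_min h (convex_setOf_norm_sub_le_norm_sub x y) hw

end

/-- Let `z₁, …, z_k ∈ ℝⁿ` and `x, y ∈ ℝⁿ` satisfy `‖x − zᵢ‖ ≤ ‖y − zᵢ‖`
for every `i`. Then `‖x − z‖ ≤ ‖y − z‖` for every `z` in the convex hull of
`{z₁, …, z_k}`; in particular, if `y` belongs to this convex hull, then `x = y`. -/
theorem stmt_0 {n k : ℕ} (z : Fin k → EuclideanSpace ℝ (Fin n))
    (x y : EuclideanSpace ℝ (Fin n))
    (h : ∀ i, ‖x - z i‖ ≤ ‖y - z i‖) :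
    (∀ w ∈ convexHull ℝ (Set.range z), ‖x - w‖ ≤ ‖y - w‖) ∧
      (y ∈ convexHull ℝ (Set.range z) → x = y) := by
  have hz : ∀ w ∈ Set.range z, ‖x - w‖ ≤ ‖y - w‖ := by
    rintro _ ⟨i, rfl⟩
    exact h i
  refine ⟨fun w hw => norm_sub_le_norm_sub_of_mem_convexHull hz hw, fun hy => ?_⟩
  have hxy : ‖x - y‖ ≤ 0 := by
    simpa using norm_sub_le_norm_sub_of_mem_convexHull hz hy
  exact sub_eq_zero.mp (norm_le_zero_iff.mp hxy)
end

section
/- Let S ⊆ ℝⁿ be an arbitrary subset and let u : S → ℝᵐ be an isometry, i.e. ‖u(x) − u(y)‖ = ‖x − y‖ for all x, y ∈ S. Then there exists a unique 1-Lipschitz map ũ : Conv(S) → ℝᵐ with ũ|_S = u; moreover ũ is an isometry (and is affine). -/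
/-!
For weights `c` with `∑ c i = 0`, polarization gives
`‖∑ c i • z i‖ ^ 2 = -(∑ i, ∑ j, c i * c j * ‖z i - z j‖ ^ 2) / 2`, which depends only on the
mutual distances of the `z i`. Hence sending a convex combination of points of `S` to the same
combination of their images under `u` is well defined and preserves distances, and it is affine
by construction. For uniqueness, a `1`-Lipschitz extension moves `x = ∑ w i • z i` to a point `p`
no farther from each `u (z i)` than `q = ∑ w i • u (z i)` is, and the variance identity
`∑ w i * ‖p - u (z i)‖ ^ 2 = ‖p - q‖ ^ 2 + ∑ w i * ‖q - u (z i)‖ ^ 2` forces `p = q`.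
-/

open Finset RealInnerProductSpace

variable {V : Type*} [AddCommGroup V] [Module ℝ V]

variable {E F : Type*} [NormedAddCommGroup E] [InnerProductSpace ℝ E]
  [NormedAddCommGroup F] [InnerProductSpace ℝ F]

theorem norm_sum_smul_sq_of_sum_eq_zero {ι : Type*} (s : Finset ι) {c : ι → ℝ}
    (hc : ∑ i ∈ s, c i = 0) (z : ι → E) :
    ‖∑ i ∈ s, c i • z i‖ ^ 2 = -(∑ i ∈ s, ∑ j ∈ s, c i * c j * ‖z i - z j‖ ^ 2) / 2 := by
  have hinner : ‖∑ i ∈ s, c i • z i‖ ^ 2 = ∑ i ∈ s, ∑ j ∈ s, c i * c j * ⟪z i, z j⟫ := by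
    simp only [← real_inner_self_eq_norm_sq, sum_inner, inner_sum, real_inner_smul_left,
      real_inner_smul_right, mul_assoc]
    exact sum_congr rfl fun i _ ↦ sum_congr rfl fun j _ ↦ by rw [real_inner_comm]
  have hsq : ∑ i ∈ s, ∑ j ∈ s, c i * c j * ‖z i - z j‖ ^ 2 =
      (∑ i ∈ s, c i * ‖z i‖ ^ 2) * ∑ j ∈ s, c j
        - 2 * ∑ i ∈ s, ∑ j ∈ s, c i * c j * ⟪z i, z j⟫
        + (∑ i ∈ s, c i) * ∑ j ∈ s, c j * ‖z j‖ ^ 2 := by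
    simp only [norm_sub_sq_real, mul_sum, sum_mul, ← sum_sub_distrib, ← sum_add_distrib]
    refine sum_congr rfl fun i _ ↦ sum_congr rfl fun j _ ↦ by ring
  rw [hsq, hc, hinner]
  ring

theorem sum_mul_norm_sub_sq_eq {ι : Type*} (s : Finset ι) {w : ι → ℝ}
    (hw : ∑ i ∈ s, w i = 1) (q : ι → F) (p : F) :
    ∑ i ∈ s, w i * ‖p - q i‖ ^ 2 =
      ‖p - ∑ i ∈ s, w i • q i‖ ^ 2 + ∑ i ∈ s, w i * ‖∑ j ∈ s, w j • q j - q i‖ ^ 2 := by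
  set e := ∑ i ∈ s, w i • q i
  have hcross : ∑ i ∈ s, w i * ⟪p - e, e - q i⟫ = 0 := by
    simp only [inner_sub_right, mul_sub, sum_sub_distrib, ← sum_mul, hw, one_mul]
    simp [e, inner_sum, real_inner_smul_right]
  have hsplit : ∀ i ∈ s, w i * ‖p - q i‖ ^ 2 =
      w i * ‖p - e‖ ^ 2 + 2 * (w i * ⟪p - e, e - q i⟫) + w i * ‖e - q i‖ ^ 2 := by
    intro i _
    rw [show p - q i = (p - e) + (e - q i) by abel, norm_add_sq_real]
    ring
  rw [sum_congr rfl hsplit, sum_add_distrib, sum_add_distrib, ← sum_mul, hw, ← mul_sum, hcross]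
  ring

theorem eq_sum_smul_of_norm_sub_le {ι : Type*} (s : Finset ι) {w : ι → ℝ}
    (hw₀ : ∀ i ∈ s, 0 ≤ w i) (hw₁ : ∑ i ∈ s, w i = 1) (q : ι → F) {p : F}
    (hp : ∀ i ∈ s, ‖p - q i‖ ≤ ‖∑ j ∈ s, w j • q j - q i‖) :
    p = ∑ i ∈ s, w i • q i := by
  have hle : ∑ i ∈ s, w i * ‖p - q i‖ ^ 2 ≤ ∑ i ∈ s, w i * ‖∑ j ∈ s, w j • q j - q i‖ ^ 2 :=
    sum_le_sum fun i hi ↦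
      mul_le_mul_of_nonneg_left (pow_le_pow_left₀ (norm_nonneg _) (hp i hi) 2) (hw₀ i hi)
  rw [sum_mul_norm_sub_sq_eq s hw₁] at hle
  have : ‖p - ∑ i ∈ s, w i • q i‖ ^ 2 = 0 := le_antisymm (by linarith) (sq_nonneg _)
  simpa [sub_eq_zero] using this

open Finsupp

theorem exists_finsupp_of_mem_convexHull {S : Set V} {x : V} (hx : x ∈ convexHull ℝ S) :
    ∃ w : V →₀ ℝ, w ∈ supported ℝ ℝ S ∧ (∀ y, 0 ≤ w y) ∧
      linearCombination ℝ (fun _ ↦ (1 : ℝ)) w = 1 ∧ linearCombination ℝ id w = x := by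
  classical
  obtain ⟨ι, _, c, z, hc₀, hc₁, hz, rfl⟩ := mem_convexHull_iff_exists_fintype.mp hx
  refine ⟨∑ i, single (z i) (c i), sum_mem fun i _ ↦ single_mem_supported ℝ _ (hz i),
    fun y ↦ ?_, by simpa using hc₁, by simp⟩
  rw [Finsupp.finsetSum_apply]
  exact sum_nonneg fun i _ ↦ by rw [single_apply]; split_ifs <;> simp [hc₀]

open Classical in
noncomputable def convexHullWeights (S : Set V) (x : V) : V →₀ ℝ :=
  if hx : x ∈ convexHull ℝ S then (exists_finsupp_of_mem_convexHull hx).choose else 0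

theorem convexHullWeights_spec {S : Set V} {x : V} (hx : x ∈ convexHull ℝ S) :
    convexHullWeights S x ∈ supported ℝ ℝ S ∧ (∀ y, 0 ≤ convexHullWeights S x y) ∧
      linearCombination ℝ (fun _ ↦ (1 : ℝ)) (convexHullWeights S x) = 1 ∧
      linearCombination ℝ id (convexHullWeights S x) = x := by
  rw [convexHullWeights, dif_pos hx]
  exact (exists_finsupp_of_mem_convexHull hx).choose_spec

theorem norm_linearCombination_eq_of_norm_sub_eq {S : Set E} {f : E → F}
    (hf : ∀ x ∈ S, ∀ y ∈ S, ‖f x - f y‖ = ‖x - y‖) {w : E →₀ ℝ} (hw : w ∈ supported ℝ ℝ S)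
    (h₀ : linearCombination ℝ (fun _ ↦ (1 : ℝ)) w = 0) :
    ‖linearCombination ℝ f w‖ = ‖linearCombination ℝ id w‖ := by
  simp only [linearCombination_apply, Finsupp.sum, smul_eq_mul, mul_one, id] at h₀ ⊢
  rw [mem_supported] at hw
  refine (sq_eq_sq₀ (norm_nonneg _) (norm_nonneg _)).1 ?_
  rw [norm_sum_smul_sq_of_sum_eq_zero _ h₀, norm_sum_smul_sq_of_sum_eq_zero _ h₀]
  congr 2
  exact sum_congr rfl fun x hx ↦ sum_congr rfl fun y hy ↦ by rw [hf x (hw hx) y (hw hy)]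

noncomputable def convexHullExtension (S : Set E) (u : E → F) (x : E) : F :=
  linearCombination ℝ u (convexHullWeights S x)

variable {S : Set E} {u : E → F}

theorem norm_convexHullExtension_sub (hu : ∀ x ∈ S, ∀ y ∈ S, ‖u x - u y‖ = ‖x - y‖)
    {x y : E} (hx : x ∈ convexHull ℝ S) (hy : y ∈ convexHull ℝ S) :
    ‖convexHullExtension S u x - convexHullExtension S u y‖ = ‖x - y‖ := by
  obtain ⟨hxS, -, hx₁, hxw⟩ := convexHullWeights_spec hx
  obtain ⟨hyS, -, hy₁, hyw⟩ := convexHullWeights_spec hy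
  have := norm_linearCombination_eq_of_norm_sub_eq hu (sub_mem hxS hyS)
    (by rw [map_sub, hx₁, hy₁, sub_self])
  rwa [map_sub, map_sub, hxw, hyw] at this

theorem convexHullExtension_eq_linearCombination
    (hu : ∀ x ∈ S, ∀ y ∈ S, ‖u x - u y‖ = ‖x - y‖) {w : E →₀ ℝ} (hw : w ∈ supported ℝ ℝ S)
    (hw₁ : linearCombination ℝ (fun _ ↦ (1 : ℝ)) w = 1)
    (hx : linearCombination ℝ id w ∈ convexHull ℝ S) :
    convexHullExtension S u (linearCombination ℝ id w) = linearCombination ℝ u w := by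
  obtain ⟨hxS, -, hx₁, hxw⟩ := convexHullWeights_spec hx
  have := norm_linearCombination_eq_of_norm_sub_eq hu (sub_mem hxS hw)
    (by rw [map_sub, hx₁, hw₁, sub_self])
  rwa [map_sub, map_sub, hxw, sub_self, norm_zero, norm_eq_zero, sub_eq_zero] at this

theorem convexHullExtension_of_mem (hu : ∀ x ∈ S, ∀ y ∈ S, ‖u x - u y‖ = ‖x - y‖) {x : E}
    (hx : x ∈ S) : convexHullExtension S u x = u x := by
  simpa using convexHullExtension_eq_linearCombination hu (w := single x 1)
    (single_mem_supported ℝ _ hx) (by simp) (by simpa using subset_convexHull ℝ S hx)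

theorem convexHullExtension_add_smul (hu : ∀ x ∈ S, ∀ y ∈ S, ‖u x - u y‖ = ‖x - y‖)
    {x y : E} (hx : x ∈ convexHull ℝ S) (hy : y ∈ convexHull ℝ S) {a b : ℝ} (ha : 0 ≤ a)
    (hb : 0 ≤ b) (hab : a + b = 1) :
    convexHullExtension S u (a • x + b • y) =
      a • convexHullExtension S u x + b • convexHullExtension S u y := by
  obtain ⟨hxS, -, hx₁, hxw⟩ := convexHullWeights_spec hx
  obtain ⟨hyS, -, hy₁, hyw⟩ := convexHullWeights_spec hy
  have hcomb := convexHullExtension_eq_linearCombination hu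
    (w := a • convexHullWeights S x + b • convexHullWeights S y)
    (add_mem (Submodule.smul_mem _ a hxS) (Submodule.smul_mem _ b hyS))
    (by simp only [map_add, map_smul, hx₁, hy₁, smul_eq_mul, mul_one, hab])
    (by simpa only [map_add, map_smul, hxw, hyw] using convex_convexHull ℝ S hx hy ha hb hab)
  simp only [map_add, map_smul, hxw, hyw] at hcomb
  exact hcomb

theorem eq_convexHullExtension_of_lipschitzOnWith
    (hu : ∀ x ∈ S, ∀ y ∈ S, ‖u x - u y‖ = ‖x - y‖) {v : E → F} (hv : ∀ x ∈ S, v x = u x)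
    (hlip : LipschitzOnWith 1 v (convexHull ℝ S)) {x : E} (hx : x ∈ convexHull ℝ S) :
    v x = convexHullExtension S u x := by
  obtain ⟨hS, hw₀, hw₁, -⟩ := convexHullWeights_spec hx
  set w := convexHullWeights S x
  have hclose : ∀ y ∈ w.support, ‖v x - u y‖ ≤ ‖convexHullExtension S u x - u y‖ := by
    intro y hy
    have hyS : y ∈ S := (mem_supported ℝ w).mp hS hy
    calc ‖v x - u y‖ = ‖v x - v y‖ := by rw [hv y hyS]
      _ ≤ ‖x - y‖ := by
        simpa [dist_eq_norm] using hlip.dist_le_mul x hx y (subset_convexHull ℝ S hyS)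
      _ = ‖convexHullExtension S u x - u y‖ := by
        rw [← norm_convexHullExtension_sub hu hx (subset_convexHull ℝ S hyS),
          convexHullExtension_of_mem hu hyS]
  simp only [linearCombination_apply, Finsupp.sum, smul_eq_mul, mul_one] at hw₁
  exact eq_sum_smul_of_norm_sub_le w.support (fun y _ ↦ hw₀ y) hw₁ u hclose

/-- Let `S ⊆ ℝⁿ` and let `u` be an isometry on `S` with values in `ℝᵐ`.
Then there is a unique `1`-Lipschitz map `ũ : Conv(S) → ℝᵐ` extending `u`; moreover `ũ`
is an isometry on `Conv(S)` (and is affine). -/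
theorem stmt_1 {n m : ℕ} (S : Set (EuclideanSpace ℝ (Fin n)))
    (u : EuclideanSpace ℝ (Fin n) → EuclideanSpace ℝ (Fin m))
    (hu : ∀ x ∈ S, ∀ y ∈ S, ‖u x - u y‖ = ‖x - y‖) :
    ∃ v : EuclideanSpace ℝ (Fin n) → EuclideanSpace ℝ (Fin m),
      (∀ x ∈ S, v x = u x) ∧
      LipschitzOnWith 1 v (convexHull ℝ S) ∧
      (∀ x ∈ convexHull ℝ S, ∀ y ∈ convexHull ℝ S, ‖v x - v y‖ = ‖x - y‖) ∧
      (∀ a ∈ convexHull ℝ S, ∀ b ∈ convexHull ℝ S, ∀ t : ℝ, 0 ≤ t → t ≤ 1 →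
        v (t • a + (1 - t) • b) = t • v a + (1 - t) • v b) ∧
      (∀ v' : EuclideanSpace ℝ (Fin n) → EuclideanSpace ℝ (Fin m),
        (∀ x ∈ S, v' x = u x) → LipschitzOnWith 1 v' (convexHull ℝ S) →
        ∀ x ∈ convexHull ℝ S, v' x = v x) := by
  have hiso := fun x (hx : x ∈ convexHull ℝ S) y (hy : y ∈ convexHull ℝ S) ↦
    norm_convexHullExtension_sub hu hx hy
  refine ⟨convexHullExtension S u, fun x hx ↦ convexHullExtension_of_mem hu hx, ?_, hiso,
    fun a ha b hb t ht₀ ht₁ ↦ convexHullExtension_add_smul hu ha hb ht₀ (sub_nonneg.2 ht₁)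
      (add_sub_cancel t 1),
    fun v hv hlip x hx ↦ eq_convexHullExtension_of_lipschitzOnWith hu hv hlip hx⟩
  refine LipschitzOnWith.of_dist_le_mul fun x hx y hy ↦ ?_
  rw [dist_eq_norm, dist_eq_norm, hiso x hx y hy, NNReal.coe_one, one_mul]
end

section
/- Let u : ℝⁿ → ℝᵐ be 1-Lipschitz. Then every leaf S of u is a closed convex subset of ℝⁿ, and the restriction u|_S is an affine isometry, i.e. there exist a linear isometry T on the span of S − S and a point such that u(x) − u(y) = T(x − y) for all x, y ∈ S. -/
/-!
If `u` is isometric on `S`, polarization shows that the difference vectors `x - y` and their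
images `u x - u y` (`x, y ∈ S`) have the same Gram matrix, so `x - y ↦ u x - u y` extends to a
linear map `T` that is isometric on the vector span of `S`. On a segment `[x, y] ⊆ ℝⁿ` with
`x, y ∈ S`, a `1`-Lipschitz map into a strictly convex space attains equality in the triangle
inequality, hence is affine; so `u z - u w = T (z - w)` for `z` on the segment and `w ∈ S`, and
maximality of the leaf puts `z` in `S`. Closedness holds because `S` is cut out by the closed
conditions `‖u y - u x‖ = ‖y - x‖`, `x ∈ S`.
-/

open scoped RealInnerProductSpace

open AffineMap (lineMap)

/-- A set `S ⊆ ℝⁿ` is a *leaf* of `u : ℝⁿ → ℝᵐ` if `u` restricted to `S` is an isometry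
and `S` is maximal with this property. -/
def IsLeaf {n m : ℕ} (u : EuclideanSpace ℝ (Fin n) → EuclideanSpace ℝ (Fin m))
    (S : Set (EuclideanSpace ℝ (Fin n))) : Prop :=
  (∀ x ∈ S, ∀ y ∈ S, ‖u x - u y‖ = ‖x - y‖) ∧
  ∀ y ∉ S, ∃ x ∈ S, ‖u y - u x‖ < ‖y - x‖

namespace LinearMap

variable {K V V' V'' : Type*} [DivisionRing K] [AddCommGroup V] [Module K V] [AddCommGroup V']
  [Module K V'] [AddCommGroup V''] [Module K V'']

theorem exists_comp_eq_of_ker_le {f : V →ₗ[K] V'} {g : V →ₗ[K] V''} (h : ker f ≤ ker g) :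
    ∃ T : V' →ₗ[K] V'', T ∘ₗ f = g := by
  obtain ⟨T, hT⟩ := exists_extend ((ker f).liftQ g h ∘ₗ f.quotKerEquivRange.symm.toLinearMap)
  refine ⟨T, LinearMap.ext fun x => ?_⟩
  have := congr($hT ⟨f x, mem_range_self f x⟩)
  simpa [quotKerEquivRange_symm_apply_image] using this

end LinearMap

section InnerProductSpace

variable {ι E F : Type*} [NormedAddCommGroup E] [InnerProductSpace ℝ E]
  [NormedAddCommGroup F] [InnerProductSpace ℝ F]

theorem inner_linearCombination_eq_of_inner_eq {v : ι → E} {w : ι → F}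
    (h : ∀ i j, ⟪w i, w j⟫ = ⟪v i, v j⟫) (c d : ι →₀ ℝ) :
    ⟪Finsupp.linearCombination ℝ w c, Finsupp.linearCombination ℝ w d⟫ =
      ⟪Finsupp.linearCombination ℝ v c, Finsupp.linearCombination ℝ v d⟫ := by
  induction c using Finsupp.induction_linear with
  | zero => simp
  | add c₁ c₂ h₁ h₂ => simp only [map_add, inner_add_left, h₁, h₂]
  | single i a =>
    induction d using Finsupp.induction_linear with
    | zero => simp
    | add d₁ d₂ h₁ h₂ => simp only [map_add, inner_add_right, h₁, h₂]
    | single j b => simp [real_inner_smul_left, real_inner_smul_right, h]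

theorem exists_linearMap_apply_eq_of_inner_eq {v : ι → E} {w : ι → F}
    (h : ∀ i j, ⟪w i, w j⟫ = ⟪v i, v j⟫) :
    ∃ T : E →ₗ[ℝ] F, (∀ x ∈ Submodule.span ℝ (Set.range v), ‖T x‖ = ‖x‖) ∧ ∀ i, T (v i) = w i := by
  have hnorm (c : ι →₀ ℝ) :
      ‖Finsupp.linearCombination ℝ w c‖ = ‖Finsupp.linearCombination ℝ v c‖ := by
    rw [norm_eq_sqrt_real_inner, norm_eq_sqrt_real_inner,
      inner_linearCombination_eq_of_inner_eq h]
  obtain ⟨T, hT⟩ := LinearMap.exists_comp_eq_of_ker_le (f := Finsupp.linearCombination ℝ v)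
    (g := Finsupp.linearCombination ℝ w) fun c hc => by
      rwa [LinearMap.mem_ker, ← norm_eq_zero, hnorm, norm_eq_zero]
  refine ⟨T, fun x hx => ?_, fun i => by simpa using congr($hT (Finsupp.single i 1))⟩
  rw [← Finsupp.range_linearCombination] at hx
  obtain ⟨c, rfl⟩ := hx
  rw [← LinearMap.comp_apply, hT, hnorm]

theorem inner_sub_sub_eq (a b c d : E) :
    ⟪a - b, c - d⟫ = (‖a - d‖ ^ 2 + ‖b - c‖ ^ 2 - ‖a - c‖ ^ 2 - ‖b - d‖ ^ 2) / 2 := by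
  simp only [norm_sub_sq_real, inner_sub_left, inner_sub_right]
  ring

theorem exists_linearMap_of_isometricOn {f : E → F} {S : Set E}
    (hf : ∀ x ∈ S, ∀ y ∈ S, ‖f x - f y‖ = ‖x - y‖) :
    ∃ T : E →ₗ[ℝ] F, (∀ v ∈ vectorSpan ℝ S, ‖T v‖ = ‖v‖) ∧
      ∀ x ∈ S, ∀ y ∈ S, f x - f y = T (x - y) := by
  let v : S × S → E := fun p => p.1 - p.2
  obtain ⟨T, hT_norm, hT⟩ := exists_linearMap_apply_eq_of_inner_eq (v := v)
    (w := fun p => f p.1 - f p.2) fun p q => by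
      simp only [v, inner_sub_sub_eq, hf _ p.1.2 _ q.1.2, hf _ p.1.2 _ q.2.2, hf _ p.2.2 _ q.1.2,
        hf _ p.2.2 _ q.2.2]
  have hspan : vectorSpan ℝ S = Submodule.span ℝ (Set.range v) := by
    rw [vectorSpan_def]
    congr 1
    ext z
    simp [v, Set.mem_vsub, vsub_eq_sub]
  exact ⟨T, hspan ▸ hT_norm, fun x hx y hy => (hT (⟨x, hx⟩, ⟨y, hy⟩)).symm⟩

end InnerProductSpace

theorem LipschitzWith.apply_lineMap_eq_of_dist_eq {E F : Type*} [NormedAddCommGroup E]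
    [NormedSpace ℝ E] [NormedAddCommGroup F] [NormedSpace ℝ F] [StrictConvexSpace ℝ F]
    {u : E → F} (hu : LipschitzWith 1 u) {x y : E} (hxy : dist (u x) (u y) = dist x y) {t : ℝ}
    (ht : t ∈ Set.Icc (0 : ℝ) 1) :
    u (lineMap x y t) = lineMap (u x) (u y) t := by
  have hdist (a b : E) : dist (u a) (u b) ≤ dist a b := by
    simpa using hu.dist_le_mul a b
  have hx : dist (u x) (u (lineMap x y t)) ≤ t * dist x y := by
    simpa [dist_left_lineMap, abs_of_nonneg ht.1] using hdist x (lineMap x y t)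
  have hy : dist (u (lineMap x y t)) (u y) ≤ (1 - t) * dist x y := by
    simpa [dist_lineMap_right, abs_of_nonneg (sub_nonneg.2 ht.2)] using
      hdist (lineMap x y t) y
  have htri := dist_triangle (u x) (u (lineMap x y t)) (u y)
  rw [hxy] at htri
  apply eq_lineMap_of_dist_eq_mul_of_dist_eq_mul <;> rw [hxy] <;> linarith

namespace IsLeaf

variable {n m : ℕ} {u : EuclideanSpace ℝ (Fin n) → EuclideanSpace ℝ (Fin m)}
  {S : Set (EuclideanSpace ℝ (Fin n))}

theorem mem_iff (hS : IsLeaf u S) {y : EuclideanSpace ℝ (Fin n)} :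
    y ∈ S ↔ ∀ x ∈ S, ‖u y - u x‖ = ‖y - x‖ :=
  ⟨fun hy x hx => hS.1 y hy x hx, fun h => by
    by_contra hy
    obtain ⟨x, hx, hlt⟩ := hS.2 y hy
    exact hlt.ne (h x hx)⟩

theorem isClosed (hS : IsLeaf u S) (hu : Continuous u) : IsClosed S := by
  have hS_eq : S = ⋂ x ∈ S, {y | ‖u y - u x‖ = ‖y - x‖} := by
    ext y
    rw [hS.mem_iff]
    simp
  rw [hS_eq]
  exact isClosed_biInter fun x _ => isClosed_eq (by fun_prop) (by fun_prop)

theorem convex (hS : IsLeaf u S) (hu : LipschitzWith 1 u) : Convex ℝ S := by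
  obtain ⟨T, hT_norm, hT⟩ := exists_linearMap_of_isometricOn hS.1
  rw [convex_iff_segment_subset]
  intro x hx y hy
  rw [segment_eq_image_lineMap]
  rintro _ ⟨t, ht, rfl⟩
  rw [hS.mem_iff]
  intro w hw
  have hu_line : u (lineMap x y t) = lineMap (u x) (u y) t :=
    hu.apply_lineMap_eq_of_dist_eq (by rw [dist_eq_norm, dist_eq_norm, hS.1 x hx y hy]) ht
  have hsub : lineMap x y t - w = (1 - t) • (x - w) + t • (y - w) := by
    rw [AffineMap.lineMap_apply_module]
    module
  have hmem : lineMap x y t - w ∈ vectorSpan ℝ S := hsub ▸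
    add_mem (Submodule.smul_mem _ _ (vsub_mem_vectorSpan ℝ hx hw))
      (Submodule.smul_mem _ _ (vsub_mem_vectorSpan ℝ hy hw))
  calc ‖u (lineMap x y t) - u w‖ = ‖T (lineMap x y t - w)‖ := by
        rw [hu_line, hsub, map_add, map_smul, map_smul, ← hT x hx w hw, ← hT y hy w hw,
          AffineMap.lineMap_apply_module]
        congr 1
        module
    _ = ‖lineMap x y t - w‖ := hT_norm _ hmem

end IsLeaf

/-- Every leaf `S` of a `1`-Lipschitz map `u : ℝⁿ → ℝᵐ` is closed and
convex, and `u` restricted to `S` is an affine isometry: there is a linear map `T`,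
isometric on the tangent space `V = Aff(S) − Aff(S)` of `S` (the vector span of `S`),
with `u x − u y = T (x − y)` for all `x, y ∈ S`. -/
theorem stmt_2 {n m : ℕ} (u : EuclideanSpace ℝ (Fin n) → EuclideanSpace ℝ (Fin m))
    (hu : LipschitzWith 1 u) (S : Set (EuclideanSpace ℝ (Fin n))) (hS : IsLeaf u S) :
    IsClosed S ∧ Convex ℝ S ∧
      ∃ T : EuclideanSpace ℝ (Fin n) →ₗ[ℝ] EuclideanSpace ℝ (Fin m),
        (∀ v ∈ vectorSpan ℝ S, ‖T v‖ = ‖v‖) ∧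
        ∀ x ∈ S, ∀ y ∈ S, u x - u y = T (x - y) :=
  ⟨hS.isClosed hu.continuous, hS.convex hu, exists_linearMap_of_isometricOn hS.1⟩
end

section
/- Let u : ℝⁿ → ℝᵐ be 1-Lipschitz and let S₁, S₂ be two leaves of u with tangent spaces V₁, V₂, orthogonal projections P₁, P₂ of ℝⁿ onto V₁, V₂, and linear isometries Tᵢ : Vᵢ → ℝᵐ with u(x) − u(y) = Tᵢ(x − y) for all x, y ∈ Sᵢ (i = 1,2). Let xᵢ ∈ Sᵢ and σᵢ = dist(xᵢ, ∂Sᵢ), i = 1,2. Then 2σ₁σ₂‖P₁P₂ − P₁T₁*T₂P₂‖ ≤ ‖x₁ − x₂‖² − ‖u(x₁) − u(x₂)‖², and for i = 1,2, 2σᵢ‖PᵢTᵢ*(u(x₁) − u(x₂)) − Pᵢ(x₁ − x₂)‖ ≤ ‖x₁ − x₂‖² − ‖u(x₁) − u(x₂)‖², where ‖·‖ on operators is the operator norm and Tᵢ* is the adjoint of Tᵢ. -/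
/-- The orthogonal projection of `ℝⁿ` onto a subspace `V`, as a map `ℝⁿ → ℝⁿ`. -/
noncomputable def projL {n : ℕ} (V : Submodule ℝ (EuclideanSpace ℝ (Fin n))) :
    EuclideanSpace ℝ (Fin n) →L[ℝ] EuclideanSpace ℝ (Fin n) :=
  V.subtypeL.comp (Submodule.orthogonalProjection V)

open ContinuousLinearMap Metric RealInnerProductSpace

/-!
Write `w = x₁ - x₂`, `z = u x₁ - u x₂`. For `x₁ + v ∈ S₁` and `x₂ + s ∈ S₂` we have
`u (x₁ + v) - u (x₂ + s) = z + T₁ v - T₂ s`, so squaring the Lipschitz bound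
`‖z + T₁ v - T₂ s‖ ≤ ‖w + v - s‖` and using that `Tᵢ` is isometric on `Vᵢ` gives
`2 (⟪P₁T₁*z - P₁w, v⟫ - ⟪P₂T₂*z - P₂w, s⟫ + ⟪v, s⟫ - ⟪T₁v, T₂s⟫) ≤ ‖w‖² - ‖z‖²`.
A segment in the affine hull of `Sᵢ` that leaves `Sᵢ` meets `∂Sᵢ`, so `v` and `s` may range over
the balls of radii `σ₁`, `σ₂` in `V₁`, `V₂`. Taking `s = 0`, resp. `v = 0`, bounds the linear
terms; adding the inequalities for `(v, s)` and `(-v, -s)` kills them and bounds the bilinear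
term, whose supremum over the two balls is `σ₁σ₂‖P₁P₂ - P₁T₁*T₂P₂‖`.
-/

theorem mul_le_of_forall_lt_mul_le {σ a C : ℝ} (ha : 0 ≤ a) (hC : 0 ≤ C)
    (h : ∀ t, 0 ≤ t → t < σ → t * a ≤ C) : σ * a ≤ C := by
  refine le_of_forall_lt_imp_le_of_dense fun r hr => ?_
  rcases le_or_gt r 0 with hr0 | hr0
  · exact hr0.trans hC
  have ha0 : 0 < a := lt_of_le_of_ne ha fun h0 => by simp [← h0] at hr; linarith
  have := h (r / a) (by positivity) ((div_lt_iff₀ ha0).2 hr)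
  rwa [div_mul_cancel₀ r ha0.ne'] at this

theorem ContinuousLinearMap.mul_opNorm_le_of_forall_norm_lt {E F : Type*}
    [NormedAddCommGroup E] [NormedSpace ℝ E] [NormedAddCommGroup F] [NormedSpace ℝ F]
    (f : E →L[ℝ] F) {σ C : ℝ} (hC : 0 ≤ C) (h : ∀ x, ‖x‖ < σ → ‖f x‖ ≤ C) :
    σ * ‖f‖ ≤ C := by
  rcases le_or_gt σ 0 with hσ | hσ
  · exact (mul_nonpos_of_nonpos_of_nonneg hσ (norm_nonneg f)).trans hC
  rw [← le_div_iff₀' hσ]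
  refine f.opNorm_le_of_unit_norm (by positivity) fun x hx => ?_
  rw [le_div_iff₀' hσ]
  refine mul_le_of_forall_lt_mul_le (norm_nonneg _) hC fun t ht htσ => ?_
  have := h (t • x) (by rwa [norm_smul, hx, mul_one, Real.norm_of_nonneg ht])
  rwa [map_smul, norm_smul, Real.norm_of_nonneg ht] at this

theorem map_add_eq_of_forall_map_sub_eq {E F : Type*} [AddCommGroup E] [AddCommGroup F]
    {u T : E → F} {S : Set E} (hT : ∀ x ∈ S, ∀ y ∈ S, u x - u y = T (x - y)) {x v : E}
    (hx : x ∈ S) (hxv : x + v ∈ S) : u (x + v) = u x + T v := by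
  rw [← add_sub_cancel_left x v, ← hT _ hxv _ hx, add_sub_cancel_left, add_sub_cancel]

theorem LipschitzWith.norm_map_sub_sq_le {E F : Type*} [SeminormedAddCommGroup E]
    [SeminormedAddCommGroup F] {u : E → F} (hu : LipschitzWith 1 u) (x y : E) :
    ‖u x - u y‖ ^ 2 ≤ ‖x - y‖ ^ 2 :=
  pow_le_pow_left₀ (norm_nonneg _) (by simpa using hu.norm_sub_le x y) 2

section AffineSpan

variable {E : Type*} [NormedAddCommGroup E] [NormedSpace ℝ E] {S : Set E}

theorem mem_of_mem_affineSpan_of_edist_lt {x y : E} (hx : x ∈ S) (hy : y ∈ affineSpan ℝ S)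
    (hxy : edist x y < infEDist x (intrinsicFrontier ℝ S)) : y ∈ S := by
  by_contra hyS
  let γ : unitInterval → affineSpan ℝ S := fun t =>
    ⟨AffineMap.lineMap x y (t : ℝ), AffineMap.lineMap_mem _ (mem_affineSpan ℝ hx) hy⟩
  have hγ : Continuous γ :=
    (AffineMap.lineMap_continuous.comp continuous_subtype_val).subtype_mk _
  obtain ⟨t, ht⟩ : (frontier (γ ⁻¹' ((↑) ⁻¹' S))).Nonempty :=
    nonempty_frontier_iff.2 ⟨⟨0, by simpa [γ] using hx⟩,
      fun h => hyS (by simpa [γ] using Set.eq_univ_iff_forall.1 h 1)⟩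
  have ht_mem : (γ t : E) ∈ intrinsicFrontier ℝ S :=
    mem_intrinsicFrontier.2 ⟨γ t, hγ.frontier_preimage_subset _ ht, rfl⟩
  have ht_near : edist x (γ t) ≤ edist x y := by
    rw [edist_dist, edist_dist, dist_comm, dist_lineMap_left, Real.norm_of_nonneg t.2.1]
    exact ENNReal.ofReal_le_ofReal (mul_le_of_le_one_left dist_nonneg t.2.2)
  exact (hxy.trans_le ((infEDist_le_edist_of_mem ht_mem).trans ht_near)).false

theorem add_mem_of_mem_vectorSpan_of_norm_lt {x v : E} (hx : x ∈ S) (hv : v ∈ vectorSpan ℝ S)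
    {σ : ℝ} (hσ : ENNReal.ofReal σ = infEDist x (intrinsicFrontier ℝ S)) (hvσ : ‖v‖ < σ) :
    x + v ∈ S := by
  refine mem_of_mem_affineSpan_of_edist_lt hx ?_ ?_
  · rw [add_comm, ← vadd_eq_add]
    exact AffineSubspace.vadd_mem_of_mem_direction (direction_affineSpan ℝ S ▸ hv)
      (mem_affineSpan ℝ hx)
  · rw [← hσ, edist_dist, dist_self_add_right]
    exact (ENNReal.ofReal_lt_ofReal_iff_of_nonneg (norm_nonneg v)).2 hvσ

end AffineSpan

section InnerProductSpace

variable {E F : Type*} [NormedAddCommGroup E] [InnerProductSpace ℝ E]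
  [NormedAddCommGroup F] [InnerProductSpace ℝ F]

theorem mul_norm_le_of_forall_inner_le {K : Submodule ℝ E} {q : E} (hq : q ∈ K) {σ C : ℝ}
    (hC : 0 ≤ C) (h : ∀ v ∈ K, ‖v‖ < σ → ⟪q, v⟫ ≤ C) : σ * ‖q‖ ≤ C := by
  rcases eq_or_ne q 0 with rfl | hq0
  · simpa using hC
  have hqn : 0 < ‖q‖ := norm_pos_iff.2 hq0
  refine mul_le_of_forall_lt_mul_le hqn.le hC fun t ht htσ => ?_
  have hnorm : ‖(t / ‖q‖) • q‖ = t := by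
    rw [norm_smul, Real.norm_of_nonneg (by positivity), div_mul_cancel₀ t hqn.ne']
  have := h _ (K.smul_mem _ hq) (hnorm ▸ htσ)
  rwa [real_inner_smul_right, real_inner_self_eq_norm_sq, div_mul_eq_mul_div, sq,
    ← mul_assoc, mul_div_assoc, div_self hqn.ne', mul_one] at this

theorem mul_mul_opNorm_le_of_forall_inner_le {G : Type*} [NormedAddCommGroup G] [NormedSpace ℝ G]
    {K : Submodule ℝ E} {B : G →L[ℝ] E} (hB : ∀ e, B e ∈ K) {σ₁ σ₂ C : ℝ} (hσ₁ : 0 ≤ σ₁)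
    (hC : 0 ≤ C) (h : ∀ v ∈ K, ‖v‖ < σ₁ → ∀ e, ‖e‖ < σ₂ → ⟪B e, v⟫ ≤ C) :
    σ₁ * σ₂ * ‖B‖ ≤ C := by
  have := (σ₁ • B).mul_opNorm_le_of_forall_norm_lt hC fun e he => by
    rw [smul_apply, norm_smul, Real.norm_of_nonneg hσ₁]
    exact mul_norm_le_of_forall_inner_le (hB e) hC fun v hv hvσ => h v hv hvσ e he
  rwa [norm_smul, Real.norm_of_nonneg hσ₁, mul_left_comm, ← mul_assoc] at this

theorem Submodule.inner_starProjection_eq_of_mem_right (K : Submodule ℝ E)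
    [K.HasOrthogonalProjection] {v : E} (hv : v ∈ K) (y : E) :
    ⟪K.starProjection y, v⟫ = ⟪y, v⟫ := by
  rw [K.inner_starProjection_left_eq_right, K.starProjection_eq_self_iff.2 hv]

theorem two_mul_inner_le_of_lipschitzWith_one {u : E → F} (hu : LipschitzWith 1 u)
    {x₁ x₂ v s : E} {a b : F} (ha : u (x₁ + v) = u x₁ + a) (hb : u (x₂ + s) = u x₂ + b)
    (hav : ‖a‖ = ‖v‖) (hbs : ‖b‖ = ‖s‖) :
    2 * (⟪u x₁ - u x₂, a⟫ - ⟪x₁ - x₂, v⟫ - (⟪u x₁ - u x₂, b⟫ - ⟪x₁ - x₂, s⟫) +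
      (⟪v, s⟫ - ⟪a, b⟫)) ≤ ‖x₁ - x₂‖ ^ 2 - ‖u x₁ - u x₂‖ ^ 2 := by
  have h : ‖u x₁ - u x₂ + a - b‖ ≤ ‖x₁ - x₂ + v - s‖ := by
    rw [show u x₁ - u x₂ + a - b = u (x₁ + v) - u (x₂ + s) by rw [ha, hb]; abel,
      show x₁ - x₂ + v - s = x₁ + v - (x₂ + s) by abel]
    simpa using hu.norm_sub_le (x₁ + v) (x₂ + s)
  generalize u x₁ - u x₂ = z at h ⊢
  generalize x₁ - x₂ = w at h ⊢
  have hsq := pow_le_pow_left₀ (norm_nonneg _) h 2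
  simp only [norm_sub_sq_real, norm_add_sq_real, inner_add_left, hav, hbs] at hsq
  linarith

variable [CompleteSpace E] [CompleteSpace F] (K : Submodule ℝ E) [K.HasOrthogonalProjection]
  (T : E →L[ℝ] F)

theorem adjoint_comp_starProjection :
    adjoint (T ∘L K.starProjection) = K.starProjection ∘L adjoint T := by
  rw [adjoint_comp, (isSelfAdjoint_starProjection K).adjoint_eq]

theorem adjoint_comp_starProjection_apply_mem (y : F) :
    adjoint (T ∘L K.starProjection) y ∈ K := by
  rw [adjoint_comp_starProjection]
  exact K.starProjection_apply_mem _

theorem inner_adjoint_comp_starProjection_apply {v : E} (hv : v ∈ K) (y : F) :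
    ⟪adjoint (T ∘L K.starProjection) y, v⟫ = ⟪y, T v⟫ := by
  rw [adjoint_inner_left, comp_apply, K.starProjection_eq_self_iff.2 hv]

end InnerProductSpace

section Leaf

variable {E F : Type*} [NormedAddCommGroup E] [InnerProductSpace ℝ E] [CompleteSpace E]
  [NormedAddCommGroup F] [InnerProductSpace ℝ F] [CompleteSpace F]
  {u : E → F} {S S₁ S₂ : Set E} {T T₁ T₂ : E →L[ℝ] F}

theorem two_mul_mul_norm_adjoint_sub_starProjection_le (hu : LipschitzWith 1 u)
    [(vectorSpan ℝ S).HasOrthogonalProjection] (hTiso : ∀ v ∈ vectorSpan ℝ S, ‖T v‖ = ‖v‖)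
    (hT : ∀ x ∈ S, ∀ y ∈ S, u x - u y = T (x - y)) {x : E} (hx : x ∈ S) {σ : ℝ}
    (hσ : ENNReal.ofReal σ = infEDist x (intrinsicFrontier ℝ S)) (y : E) :
    2 * σ * ‖adjoint (T ∘L (vectorSpan ℝ S).starProjection) (u x - u y) -
        (vectorSpan ℝ S).starProjection (x - y)‖ ≤ ‖x - y‖ ^ 2 - ‖u x - u y‖ ^ 2 := by
  have hD := sub_nonneg.2 (hu.norm_map_sub_sq_le x y)
  have hq_mem := (vectorSpan ℝ S).sub_mem (adjoint_comp_starProjection_apply_mem _ T (u x - u y))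
    ((vectorSpan ℝ S).starProjection_apply_mem (x - y))
  have := mul_norm_le_of_forall_inner_le hq_mem
    (C := (‖x - y‖ ^ 2 - ‖u x - u y‖ ^ 2) / 2) (by linarith) fun v hv hvσ => by
    have hxv := add_mem_of_mem_vectorSpan_of_norm_lt hx hv hσ hvσ
    have := two_mul_inner_le_of_lipschitzWith_one hu (map_add_eq_of_forall_map_sub_eq hT hx hxv)
      (x₂ := y) (b := 0) (s := 0) (by simp) (hTiso v hv) (by simp)
    rw [inner_sub_left, inner_adjoint_comp_starProjection_apply _ T hv,
      (vectorSpan ℝ S).inner_starProjection_eq_of_mem_right hv]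
    simp only [inner_zero_right, sub_zero, add_zero] at this
    linarith
  linarith

theorem two_mul_mul_mul_norm_starProjection_comp_sub_le (hu : LipschitzWith 1 u)
    [(vectorSpan ℝ S₁).HasOrthogonalProjection] [(vectorSpan ℝ S₂).HasOrthogonalProjection]
    (hT₁iso : ∀ v ∈ vectorSpan ℝ S₁, ‖T₁ v‖ = ‖v‖) (hT₂iso : ∀ v ∈ vectorSpan ℝ S₂, ‖T₂ v‖ = ‖v‖)
    (hT₁ : ∀ x ∈ S₁, ∀ y ∈ S₁, u x - u y = T₁ (x - y))
    (hT₂ : ∀ x ∈ S₂, ∀ y ∈ S₂, u x - u y = T₂ (x - y)) {x₁ x₂ : E} (hx₁ : x₁ ∈ S₁)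
    (hx₂ : x₂ ∈ S₂) {σ₁ σ₂ : ℝ} (hσ₁0 : 0 ≤ σ₁)
    (hσ₁ : ENNReal.ofReal σ₁ = infEDist x₁ (intrinsicFrontier ℝ S₁))
    (hσ₂ : ENNReal.ofReal σ₂ = infEDist x₂ (intrinsicFrontier ℝ S₂)) :
    2 * σ₁ * σ₂ * ‖(vectorSpan ℝ S₁).starProjection ∘L (vectorSpan ℝ S₂).starProjection -
        adjoint (T₁ ∘L (vectorSpan ℝ S₁).starProjection) ∘L
          (T₂ ∘L (vectorSpan ℝ S₂).starProjection)‖ ≤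
      ‖x₁ - x₂‖ ^ 2 - ‖u x₁ - u x₂‖ ^ 2 := by
  let V₁ := vectorSpan ℝ S₁
  let V₂ := vectorSpan ℝ S₂
  set B := V₁.starProjection ∘L V₂.starProjection - adjoint (T₁ ∘L V₁.starProjection) ∘L
    (T₂ ∘L V₂.starProjection)
  set D := ‖x₁ - x₂‖ ^ 2 - ‖u x₁ - u x₂‖ ^ 2
  have hD : 0 ≤ D := sub_nonneg.2 (hu.norm_map_sub_sq_le x₁ x₂)
  have hlin : ∀ v ∈ V₁, ‖v‖ < σ₁ → ∀ s ∈ V₂, ‖s‖ < σ₂ →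
      2 * (⟪u x₁ - u x₂, T₁ v⟫ - ⟪x₁ - x₂, v⟫ - (⟪u x₁ - u x₂, T₂ s⟫ - ⟪x₁ - x₂, s⟫) +
        (⟪v, s⟫ - ⟪T₁ v, T₂ s⟫)) ≤ D := fun v hv hvσ s hs hsσ =>
    two_mul_inner_le_of_lipschitzWith_one hu
      (map_add_eq_of_forall_map_sub_eq hT₁ hx₁
        (add_mem_of_mem_vectorSpan_of_norm_lt hx₁ hv hσ₁ hvσ))
      (map_add_eq_of_forall_map_sub_eq hT₂ hx₂
        (add_mem_of_mem_vectorSpan_of_norm_lt hx₂ hs hσ₂ hsσ))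
      (hT₁iso v hv) (hT₂iso s hs)
  have hbil : ∀ v ∈ V₁, ‖v‖ < σ₁ → ∀ s ∈ V₂, ‖s‖ < σ₂ → 2 * (⟪v, s⟫ - ⟪T₁ v, T₂ s⟫) ≤ D := by
    intro v hv hvσ s hs hsσ
    have hneg := hlin (-v) (V₁.neg_mem hv) (by rwa [norm_neg]) (-s) (V₂.neg_mem hs)
      (by rwa [norm_neg])
    simp only [map_neg, inner_neg_left, inner_neg_right, neg_neg] at hneg
    linarith [hlin v hv hvσ s hs hsσ]
  have := mul_mul_opNorm_le_of_forall_inner_le (σ₂ := σ₂) (B := B) (C := D / 2)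
    (fun e => V₁.sub_mem (V₁.starProjection_apply_mem _)
      (adjoint_comp_starProjection_apply_mem V₁ T₁ _)) hσ₁0 (by linarith) fun v hv hvσ e he => by
    have := hbil v hv hvσ _ (V₂.starProjection_apply_mem e)
      ((V₂.norm_starProjection_apply_le e).trans_lt he)
    change ⟪V₁.starProjection (V₂.starProjection e) -
      adjoint (T₁ ∘L V₁.starProjection) (T₂ (V₂.starProjection e)), v⟫ ≤ D / 2
    rw [inner_sub_left, V₁.inner_starProjection_eq_of_mem_right hv,
      inner_adjoint_comp_starProjection_apply V₁ T₁ hv, real_inner_comm, real_inner_comm (T₁ v)]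
    linarith
  linarith

end Leaf

theorem projL_eq_starProjection {n : ℕ} (V : Submodule ℝ (EuclideanSpace ℝ (Fin n))) :
    projL V = V.starProjection :=
  rfl

theorem stmt_3_general {n m : ℕ} (u : EuclideanSpace ℝ (Fin n) → EuclideanSpace ℝ (Fin m))
    (hu : LipschitzWith 1 u)
    (S₁ S₂ : Set (EuclideanSpace ℝ (Fin n)))
    (T₁ T₂ : EuclideanSpace ℝ (Fin n) →L[ℝ] EuclideanSpace ℝ (Fin m))
    (hT₁iso : ∀ v ∈ vectorSpan ℝ S₁, ‖T₁ v‖ = ‖v‖)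
    (hT₂iso : ∀ v ∈ vectorSpan ℝ S₂, ‖T₂ v‖ = ‖v‖)
    (hT₁ : ∀ x ∈ S₁, ∀ y ∈ S₁, u x - u y = T₁ (x - y))
    (hT₂ : ∀ x ∈ S₂, ∀ y ∈ S₂, u x - u y = T₂ (x - y))
    (x₁ x₂ : EuclideanSpace ℝ (Fin n)) (hx₁ : x₁ ∈ S₁) (hx₂ : x₂ ∈ S₂)
    (σ₁ σ₂ : ℝ) (hσ₁0 : 0 ≤ σ₁)
    (hσ₁ : ENNReal.ofReal σ₁ = EMetric.infEdist x₁ (intrinsicFrontier ℝ S₁))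
    (hσ₂ : ENNReal.ofReal σ₂ = EMetric.infEdist x₂ (intrinsicFrontier ℝ S₂)) :
    2 * σ₁ * σ₂ *
        ‖(projL (vectorSpan ℝ S₁)).comp (projL (vectorSpan ℝ S₂)) -
          (ContinuousLinearMap.adjoint (T₁.comp (projL (vectorSpan ℝ S₁)))).comp
            (T₂.comp (projL (vectorSpan ℝ S₂)))‖ ≤
      ‖x₁ - x₂‖ ^ 2 - ‖u x₁ - u x₂‖ ^ 2 ∧
    2 * σ₁ *
        ‖ContinuousLinearMap.adjoint (T₁.comp (projL (vectorSpan ℝ S₁))) (u x₁ - u x₂) -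
          projL (vectorSpan ℝ S₁) (x₁ - x₂)‖ ≤
      ‖x₁ - x₂‖ ^ 2 - ‖u x₁ - u x₂‖ ^ 2 ∧
    2 * σ₂ *
        ‖ContinuousLinearMap.adjoint (T₂.comp (projL (vectorSpan ℝ S₂))) (u x₁ - u x₂) -
          projL (vectorSpan ℝ S₂) (x₁ - x₂)‖ ≤
      ‖x₁ - x₂‖ ^ 2 - ‖u x₁ - u x₂‖ ^ 2 := by
  simp only [projL_eq_starProjection]
  refine ⟨two_mul_mul_mul_norm_starProjection_comp_sub_le hu hT₁iso hT₂iso hT₁ hT₂ hx₁ hx₂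
      hσ₁0 hσ₁ hσ₂, two_mul_mul_norm_adjoint_sub_starProjection_le hu hT₁iso hT₁ hx₁ hσ₁ x₂, ?_⟩
  have := two_mul_mul_norm_adjoint_sub_starProjection_le hu hT₂iso hT₂ hx₂ hσ₂ x₁
  rwa [← neg_sub x₁, ← neg_sub (u x₁), map_neg, map_neg, neg_sub_neg, norm_sub_rev, norm_neg,
    norm_neg] at this

/-- Let `S₁, S₂` be leaves of a `1`-Lipschitz map `u : ℝⁿ → ℝᵐ`, with
tangent spaces `Vᵢ = vectorSpan Sᵢ`, orthogonal projections `Pᵢ` onto `Vᵢ`, and linear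
maps `Tᵢ` isometric on `Vᵢ` with `u x − u y = Tᵢ (x − y)` on `Sᵢ`.  Let `xᵢ ∈ Sᵢ` and let
`σᵢ = dist(xᵢ, ∂Sᵢ)` (distance to the relative boundary, assumed finite; the distance to
the empty set being `+∞`).  Then
`2σ₁σ₂‖P₁P₂ − P₁T₁*T₂P₂‖ ≤ ‖x₁ − x₂‖² − ‖u x₁ − u x₂‖²` and, for `i = 1, 2`,
`2σᵢ‖PᵢTᵢ*(u x₁ − u x₂) − Pᵢ(x₁ − x₂)‖ ≤ ‖x₁ − x₂‖² − ‖u x₁ − u x₂‖²`;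
here `PᵢTᵢ* = (TᵢPᵢ)*` and `‖·‖` on operators is the operator norm. -/
theorem stmt_3 {n m : ℕ} (u : EuclideanSpace ℝ (Fin n) → EuclideanSpace ℝ (Fin m))
    (hu : LipschitzWith 1 u)
    (S₁ S₂ : Set (EuclideanSpace ℝ (Fin n))) (hS₁ : IsLeaf u S₁) (hS₂ : IsLeaf u S₂)
    (T₁ T₂ : EuclideanSpace ℝ (Fin n) →L[ℝ] EuclideanSpace ℝ (Fin m))
    (hT₁iso : ∀ v ∈ vectorSpan ℝ S₁, ‖T₁ v‖ = ‖v‖)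
    (hT₂iso : ∀ v ∈ vectorSpan ℝ S₂, ‖T₂ v‖ = ‖v‖)
    (hT₁ : ∀ x ∈ S₁, ∀ y ∈ S₁, u x - u y = T₁ (x - y))
    (hT₂ : ∀ x ∈ S₂, ∀ y ∈ S₂, u x - u y = T₂ (x - y))
    (x₁ x₂ : EuclideanSpace ℝ (Fin n)) (hx₁ : x₁ ∈ S₁) (hx₂ : x₂ ∈ S₂)
    (σ₁ σ₂ : ℝ) (hσ₁0 : 0 ≤ σ₁) (hσ₂0 : 0 ≤ σ₂)
    (hσ₁ : ENNReal.ofReal σ₁ = EMetric.infEdist x₁ (intrinsicFrontier ℝ S₁))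
    (hσ₂ : ENNReal.ofReal σ₂ = EMetric.infEdist x₂ (intrinsicFrontier ℝ S₂)) :
    2 * σ₁ * σ₂ *
        ‖(projL (vectorSpan ℝ S₁)).comp (projL (vectorSpan ℝ S₂)) -
          (ContinuousLinearMap.adjoint (T₁.comp (projL (vectorSpan ℝ S₁)))).comp
            (T₂.comp (projL (vectorSpan ℝ S₂)))‖ ≤
      ‖x₁ - x₂‖ ^ 2 - ‖u x₁ - u x₂‖ ^ 2 ∧
    2 * σ₁ *
        ‖ContinuousLinearMap.adjoint (T₁.comp (projL (vectorSpan ℝ S₁))) (u x₁ - u x₂) -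
          projL (vectorSpan ℝ S₁) (x₁ - x₂)‖ ≤
      ‖x₁ - x₂‖ ^ 2 - ‖u x₁ - u x₂‖ ^ 2 ∧
    2 * σ₂ *
        ‖ContinuousLinearMap.adjoint (T₂.comp (projL (vectorSpan ℝ S₂))) (u x₁ - u x₂) -
          projL (vectorSpan ℝ S₂) (x₁ - x₂)‖ ≤
      ‖x₁ - x₂‖ ^ 2 - ‖u x₁ - u x₂‖ ^ 2 :=
  stmt_3_general u hu S₁ S₂ T₁ T₂ hT₁iso hT₂iso hT₁ hT₂ x₁ x₂ hx₁ hx₂ σ₁ σ₂ hσ₁0 hσ₁ hσ₂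
end

section
/- Let m ≤ n and let u : ℝⁿ → ℝᵐ be 1-Lipschitz. If S is a leaf of u of dimension m, then u is (Fréchet) differentiable at every point of the relative interior of S. -/
open RealInnerProductSpace Metric Module

theorem exists_pos_add_mem_of_mem_intrinsicInterior {E : Type*} [NormedAddCommGroup E]
    [NormedSpace ℝ E] {S : Set E} {z : E} (hz : z ∈ intrinsicInterior ℝ S) :
    ∃ r > 0, ∀ x ∈ vectorSpan ℝ S, ‖x‖ < r → z + x ∈ S := by
  obtain ⟨y, hy, rfl⟩ := mem_intrinsicInterior.1 hz
  obtain ⟨r, hr, hball⟩ := Metric.isOpen_iff.1 isOpen_interior y hy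
  refine ⟨r, hr, fun x hx hxr => ?_⟩
  have hmem : x +ᵥ (y : E) ∈ affineSpan ℝ S :=
    AffineSubspace.vadd_mem_of_mem_direction (by rwa [direction_affineSpan]) y.2
  rw [add_comm]
  refine interior_subset (s := ((↑) ⁻¹' S : Set (affineSpan ℝ S))) (hball (a := ⟨_, hmem⟩) ?_)
  simpa [Subtype.dist_eq, dist_eq_norm] using hxr

section InnerProductSpace

variable {E F : Type*} [NormedAddCommGroup E] [InnerProductSpace ℝ E]
  [NormedAddCommGroup F] [InnerProductSpace ℝ F]

theorem inner_map_map_of_norm_sub_map_eq {A : Set E} {ψ : E → F} (h0 : (0 : E) ∈ A)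
    (hψ0 : ψ 0 = 0) (hψ : ∀ x ∈ A, ∀ y ∈ A, ‖ψ x - ψ y‖ = ‖x - y‖) {x y : E} (hx : x ∈ A)
    (hy : y ∈ A) : ⟪ψ x, ψ y⟫ = ⟪x, y⟫ := by
  have hnorm : ∀ w ∈ A, ‖ψ w‖ = ‖w‖ := fun w hw => by simpa [hψ0] using hψ w hw 0 h0
  have h1 := norm_sub_sq_real (ψ x) (ψ y)
  have h2 := norm_sub_sq_real x y
  rw [hψ x hx y hy, hnorm x hx, hnorm y hy] at h1
  linarith

theorem exists_linearIsometry_eqOn_ball [FiniteDimensional ℝ E] {ψ : E → F} {r : ℝ}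
    (hr : 0 < r) (hψ0 : ψ 0 = 0)
    (hψ : ∀ x ∈ ball (0 : E) r, ∀ y ∈ ball (0 : E) r, ‖ψ x - ψ y‖ = ‖x - y‖) :
    ∃ L : E →ₗᵢ[ℝ] F, Set.EqOn ψ L (ball 0 r) := by
  have hinner {x y : E} (hx : x ∈ ball 0 r) (hy : y ∈ ball 0 r) : ⟪ψ x, ψ y⟫ = ⟪x, y⟫ :=
    inner_map_map_of_norm_sub_map_eq (mem_ball_self hr) hψ0 hψ hx hy
  set b := stdOrthonormalBasis ℝ E
  set s := r / 2 with hs_def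
  have hs : s ≠ 0 := by positivity
  have hsb (i) : s • b i ∈ ball (0 : E) r := by
    rw [mem_ball_zero_iff, norm_smul, b.orthonormal.1 i, Real.norm_of_nonneg (by positivity),
      mul_one]
    linarith
  set c := fun i => s⁻¹ • ψ (s • b i)
  set f := b.toBasis.constr ℝ c
  have hfb (i) : f (b i) = c i := by
    simpa only [OrthonormalBasis.coe_toBasis] using b.toBasis.constr_basis ℝ c i
  have hc : Orthonormal ℝ (f ∘ b.toBasis) := by
    rw [orthonormal_iff_ite]
    intro i j
    simp only [Function.comp_apply, OrthonormalBasis.coe_toBasis, hfb, c,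
      real_inner_smul_left, real_inner_smul_right, hinner (hsb i) (hsb j)]
    rw [← orthonormal_iff_ite.1 b.orthonormal i j]
    field_simp
  set L := f.isometryOfOrthonormal (by simp [b.orthonormal]) hc
  have hLb (i) : L (b i) = s⁻¹ • ψ (s • b i) := hfb i
  refine ⟨L, fun x hx => ?_⟩
  have hxL : (innerₛₗ ℝ (ψ x)) ∘ₗ L.toLinearMap = innerₛₗ ℝ x := by
    refine b.toBasis.ext fun i => ?_
    simp only [LinearMap.coe_comp, Function.comp_apply, OrthonormalBasis.coe_toBasis,
      LinearIsometry.coe_toLinearMap, hLb, innerₛₗ_apply_apply, real_inner_smul_right,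
      hinner hx (hsb i)]
    field_simp
  have key : ‖ψ x - L x‖ ^ 2 = 0 := by
    have h := LinearMap.congr_fun hxL x
    simp only [LinearMap.coe_comp, Function.comp_apply, innerₛₗ_apply_apply,
      LinearIsometry.coe_toLinearMap] at h
    rw [norm_sub_sq_real, h, L.norm_map, ← real_inner_self_eq_norm_sq (ψ x), hinner hx hx,
      real_inner_self_eq_norm_sq]
    ring
  simpa [sub_eq_zero] using key

theorem two_mul_mul_norm_le_sq_of_inner_eq_zero {a q : E} (haq : ⟪a, q⟫ = 0) {t : ℝ}
    (ht : 0 < t) (h : ‖a + (t / ‖a‖) • a‖ ≤ ‖q + (t / ‖a‖) • a‖) : 2 * t * ‖a‖ ≤ ‖q‖ ^ 2 := by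
  rcases eq_or_ne a 0 with rfl | ha
  · simp
  have hlhs : ‖a + (t / ‖a‖) • a‖ = ‖a‖ + t := by
    rw [show a + (t / ‖a‖) • a = (1 + t / ‖a‖) • a by rw [add_smul, one_smul], norm_smul,
      Real.norm_of_nonneg (by positivity)]
    field_simp
  have hrhs : ‖q + (t / ‖a‖) • a‖ ^ 2 = ‖q‖ ^ 2 + t ^ 2 := by
    rw [norm_add_sq_real, real_inner_smul_right, real_inner_comm, haq, norm_smul,
      Real.norm_of_nonneg (by positivity)]
    field_simp
    ring
  have := pow_le_pow_left₀ (norm_nonneg _) h 2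
  rw [hlhs, hrhs] at this
  nlinarith

theorem hasFDerivAt_of_norm_sub_le_sq {f : E → F} {T : E →L[ℝ] F} {z : E} {δ C : ℝ}
    (hδ : 0 < δ) (hf : ∀ h : E, ‖h‖ < δ → ‖f (z + h) - f z - T h‖ ≤ C * ‖h‖ ^ 2) :
    HasFDerivAt f T z := by
  rw [hasFDerivAt_iff_isLittleO_nhds_zero]
  refine Asymptotics.IsBigO.trans_isLittleO ?_ (Asymptotics.isLittleO_norm_pow_id one_lt_two)
  refine Asymptotics.IsBigO.of_bound C ?_
  filter_upwards [ball_mem_nhds (0 : E) hδ] with h hh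
  rw [norm_pow, norm_norm]
  exact hf h (mem_ball_zero_iff.1 hh)

theorem norm_sub_sub_orthogonalProjectionOnto_le {V : Submodule ℝ E} [V.HasOrthogonalProjection]
    {L : V →ₗᵢ[ℝ] F} (hL : Function.Surjective L) {u : E → F} (hu : LipschitzWith 1 u)
    {z : E} {r : ℝ} (hr : 0 < r) (hloc : ∀ x : V, ‖x‖ < r → u (z + x) = u z + L x) {h : E}
    (hh : ‖h‖ < r / 2) :
    ‖u (z + h) - u z - L (V.orthogonalProjectionOnto h)‖ ≤ 2 / r * ‖h‖ ^ 2 := by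
  set p := V.orthogonalProjectionOnto h
  set q := Vᗮ.starProjection h
  have hpq : (p : E) + q = h := V.starProjection_add_starProjection_orthogonal h
  obtain ⟨v, hv⟩ := hL (u (z + h) - u z)
  set a := v - p
  set t := r / 4 with ht
  set x := p - (t / ‖a‖) • a
  have hx : ‖x‖ < r := by
    have hp : ‖p‖ < r / 2 := (V.norm_orthogonalProjectionOnto_apply_le h).trans_lt hh
    have ha : ‖(t / ‖a‖) • a‖ ≤ t := by
      rcases eq_or_ne a 0 with ha | ha
      · simp only [ha, smul_zero, norm_zero]; positivity
      rw [norm_smul, Real.norm_of_nonneg (by positivity),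
        div_mul_cancel₀ _ (norm_ne_zero_iff.2 ha)]
    calc ‖x‖ ≤ ‖p‖ + ‖(t / ‖a‖) • a‖ := norm_sub_le _ _
      _ < r := by linarith
  -- compare `z + h` with the leaf point `z + x`, on the far side of `z + p` from `z + v`
  have hlip : ‖(a : E) + (t / ‖a‖) • (a : E)‖ ≤ ‖q + (t / ‖a‖) • (a : E)‖ :=
    calc ‖(a : E) + (t / ‖a‖) • (a : E)‖ = ‖L (v - x)‖ := by
          rw [L.norm_map]; simp only [x, a, Submodule.coe_norm, Submodule.coe_sub,
            Submodule.coe_smul]; abel_nf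
      _ = ‖u (z + h) - u (z + x)‖ := by rw [map_sub, hv, hloc x hx]; abel_nf
      _ ≤ ‖(z + h) - (z + x)‖ := by simpa [dist_eq_norm] using hu.dist_le_mul (z + h) (z + x)
      _ = ‖q + (t / ‖a‖) • (a : E)‖ := by
          rw [add_sub_add_left_eq_sub, ← hpq]; simp only [x, a, Submodule.coe_sub,
            Submodule.coe_smul]; abel_nf
  have haq : ⟪(a : E), q⟫ = 0 := Vᗮ.starProjection_apply_mem h a a.2
  have key := two_mul_mul_norm_le_sq_of_inner_eq_zero haq (by positivity) hlip
  have hq : ‖q‖ ^ 2 ≤ ‖h‖ ^ 2 :=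
    pow_le_pow_left₀ (norm_nonneg q) (Vᗮ.norm_starProjection_apply_le h) 2
  rw [ht] at key
  rw [← hv, ← map_sub, L.norm_map, div_mul_eq_mul_div, le_div_iff₀ hr]
  change ‖(a : E)‖ * r ≤ 2 * ‖h‖ ^ 2
  linarith

end InnerProductSpace

theorem stmt_6_general {n m : ℕ}
    (u : EuclideanSpace ℝ (Fin n) → EuclideanSpace ℝ (Fin m))
    (hu : LipschitzWith 1 u)
    (S : Set (EuclideanSpace ℝ (Fin n))) (hS : IsLeaf u S)
    (hdim : Module.finrank ℝ (vectorSpan ℝ S) = m) :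
    ∀ z ∈ intrinsicInterior ℝ S, DifferentiableAt ℝ u z := by
  intro z hz
  set V := vectorSpan ℝ S
  obtain ⟨r, hr, hball⟩ := exists_pos_add_mem_of_mem_intrinsicInterior hz
  have hψ : ∀ x ∈ ball (0 : V) r, ∀ y ∈ ball (0 : V) r,
      ‖(u (z + x) - u z) - (u (z + y) - u z)‖ = ‖x - y‖ := fun x hx y hy => by
    rw [mem_ball_zero_iff] at hx hy
    simpa using hS.1 _ (hball x x.2 hx) _ (hball y y.2 hy)
  obtain ⟨L, hL⟩ := exists_linearIsometry_eqOn_ball hr (by simp) hψ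
  have hLsurj : Function.Surjective L :=
    (L.toLinearIsometryEquiv (by simp [hdim])).surjective
  have hloc (x : V) (hx : ‖x‖ < r) : u (z + x) = u z + L x := by
    rw [← hL (mem_ball_zero_iff.2 hx), add_sub_cancel]
  have hT : HasFDerivAt u (L.toContinuousLinearMap ∘L V.orthogonalProjectionOnto) z :=
    hasFDerivAt_of_norm_sub_le_sq (half_pos hr) fun h hh =>
      norm_sub_sub_orthogonalProjectionOnto_le hLsurj hu hr hloc hh
  exact hT.differentiableAt

/-- Let `m ≤ n` and let `u : ℝⁿ → ℝᵐ` be `1`-Lipschitz.  If `S` is a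
leaf of `u` of dimension `m` (the dimension of its tangent space `vectorSpan ℝ S`),
then `u` is Fréchet differentiable at every point of the relative interior of `S`. -/
theorem stmt_6 {n m : ℕ} (hmn : m ≤ n)
    (u : EuclideanSpace ℝ (Fin n) → EuclideanSpace ℝ (Fin m))
    (hu : LipschitzWith 1 u)
    (S : Set (EuclideanSpace ℝ (Fin n))) (hS : IsLeaf u S)
    (hdim : Module.finrank ℝ (vectorSpan ℝ S) = m) :
    ∀ z ∈ intrinsicInterior ℝ S, DifferentiableAt ℝ u z :=
  stmt_6_general u hu S hS hdim
end

section
/- Let u : ℝⁿ → ℝᵐ be 1-Lipschitz. If a point x₀ ∈ ℝⁿ belongs to at least two distinct leaves of u, then u is not (Fréchet) differentiable at x₀. -/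
open AffineMap Set

section

variable {E F : Type*} [NormedAddCommGroup E] [NormedSpace ℝ E]
  [NormedAddCommGroup F] [NormedSpace ℝ F]

/-- Both Lipschitz bounds through `lineMap x z t` are equalities, and in a strictly convex space
this pins the image point down. -/
theorem LipschitzWith.map_lineMap_of_dist_eq [StrictConvexSpace ℝ F] {f : E → F}
    (hf : LipschitzWith 1 f) {x z : E} (h : dist (f x) (f z) = dist x z) {t : ℝ}
    (ht : t ∈ Icc (0 : ℝ) 1) : f (lineMap x z t) = lineMap (f x) (f z) t := by
  obtain ⟨ht₀, ht₁⟩ := ht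
  have hleft : dist (f x) (f (lineMap x z t)) ≤ t * dist x z := by
    simpa [dist_left_lineMap, abs_of_nonneg ht₀] using hf.dist_le_mul x (lineMap x z t)
  have hright : dist (f (lineMap x z t)) (f z) ≤ (1 - t) * dist x z := by
    simpa [dist_lineMap_right, abs_of_nonneg (sub_nonneg.2 ht₁)] using
      hf.dist_le_mul (lineMap x z t) z
  have htri := dist_triangle (f x) (f (lineMap x z t)) (f z)
  rw [← h] at hleft hright
  exact eq_lineMap_of_dist_eq_mul_of_dist_eq_mul (by linarith) (by linarith)

theorem HasFDerivAt.apply_sub_of_map_lineMap {f : E → F} {L : E →L[ℝ] F} {x z : E}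
    (hL : HasFDerivAt f L x)
    (hseg : ∀ t ∈ Icc (0 : ℝ) 1, f (lineMap x z t) = lineMap (f x) (f z) t) :
    L (z - x) = f z - f x := by
  have hcurve : HasDerivAt (fun t : ℝ ↦ f (lineMap x z t)) (L (z - x)) 0 := by
    have hL' : HasFDerivAt f L (lineMap x z (0 : ℝ)) := by rwa [lineMap_apply_zero]
    simpa [Function.comp_def] using hL'.comp_hasDerivAt (0 : ℝ) hasDerivAt_lineMap
  have hchord : HasDerivWithinAt (fun t : ℝ ↦ f (lineMap x z t)) (f z - f x) (Icc 0 1) 0 :=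
    hasDerivAt_lineMap.hasDerivWithinAt.congr hseg (hseg 0 (left_mem_Icc.2 zero_le_one))
  exact (uniqueDiffOn_Icc zero_lt_one 0 (left_mem_Icc.2 zero_le_one)).eq_deriv _
    hcurve.hasDerivWithinAt hchord

theorem HasFDerivAt.apply_sub_of_dist_eq [StrictConvexSpace ℝ F] {f : E → F} {L : E →L[ℝ] F}
    {x z : E} (hL : HasFDerivAt f L x) (hf : LipschitzWith 1 f)
    (h : dist (f x) (f z) = dist x z) : L (z - x) = f z - f x :=
  hL.apply_sub_of_map_lineMap fun _ ↦ hf.map_lineMap_of_dist_eq h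

end

/-- By the parallelogram law, a contraction preserving `‖v‖` and `‖w‖` cannot shrink `v - w`. -/
theorem ContinuousLinearMap.norm_map_sub_of_opNorm_le_one {E F : Type*}
    [NormedAddCommGroup E] [InnerProductSpace ℝ E] [NormedAddCommGroup F] [InnerProductSpace ℝ F]
    {L : E →L[ℝ] F} (hL : ‖L‖ ≤ 1) {v w : E} (hv : ‖L v‖ = ‖v‖) (hw : ‖L w‖ = ‖w‖) :
    ‖L (v - w)‖ = ‖v - w‖ := by
  have hcontr : ∀ y, ‖L y‖ ≤ ‖y‖ := fun y ↦ L.le_of_opNorm_le hL y |>.trans_eq (one_mul _)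
  have hsum := mul_self_le_mul_self (norm_nonneg _) (hcontr (v + w))
  have hdiff := mul_self_le_mul_self (norm_nonneg _) (hcontr (v - w))
  have hpar := parallelogram_law_with_norm ℝ (L v) (L w)
  rw [← map_add, ← map_sub, hv, hw, ← parallelogram_law_with_norm ℝ v w] at hpar
  nlinarith [norm_nonneg (L (v - w)), norm_nonneg (v - w)]

theorem IsLeaf.subset_of_differentiableAt {n m : ℕ}
    {u : EuclideanSpace ℝ (Fin n) → EuclideanSpace ℝ (Fin m)} (hu : LipschitzWith 1 u)
    {A B : Set (EuclideanSpace ℝ (Fin n))} (hA : IsLeaf u A) (hB : IsLeaf u B)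
    {x₀ : EuclideanSpace ℝ (Fin n)} (hx₀A : x₀ ∈ A) (hx₀B : x₀ ∈ B)
    (hdiff : DifferentiableAt ℝ u x₀) : A ⊆ B := by
  intro z hzA
  by_contra hzB
  obtain ⟨x, hxB, hlt⟩ := hB.2 z hzB
  have hL := hdiff.hasFDerivAt
  have hleaf : ∀ {S}, IsLeaf u S → ∀ {y}, y ∈ S → x₀ ∈ S →
      fderiv ℝ u x₀ (y - x₀) = u y - u x₀ ∧ ‖fderiv ℝ u x₀ (y - x₀)‖ = ‖y - x₀‖ := by
    intro S hS y hy hx₀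
    have heq := hS.1 y hy x₀ hx₀
    have hmap := hL.apply_sub_of_dist_eq hu (by rw [dist_eq_norm', dist_eq_norm', heq])
    exact ⟨hmap, hmap ▸ heq⟩
  obtain ⟨hz, hzn⟩ := hleaf hA hzA hx₀A
  obtain ⟨hx, hxn⟩ := hleaf hB hxB hx₀B
  have := (fderiv ℝ u x₀).norm_map_sub_of_opNorm_le_one (by simpa using hL.le_of_lipschitz hu)
    hzn hxn
  rw [map_sub, hz, hx, sub_sub_sub_cancel_right, sub_sub_sub_cancel_right] at this
  exact hlt.ne this

/-- If a point `x₀ ∈ ℝⁿ` belongs to two distinct leaves of a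
`1`-Lipschitz map `u : ℝⁿ → ℝᵐ`, then `u` is not Fréchet differentiable at `x₀`. -/
theorem stmt_9 {n m : ℕ} (u : EuclideanSpace ℝ (Fin n) → EuclideanSpace ℝ (Fin m))
    (hu : LipschitzWith 1 u)
    (S₁ S₂ : Set (EuclideanSpace ℝ (Fin n))) (hS₁ : IsLeaf u S₁) (hS₂ : IsLeaf u S₂)
    (hne : S₁ ≠ S₂) (x₀ : EuclideanSpace ℝ (Fin n)) (hx₁ : x₀ ∈ S₁) (hx₂ : x₀ ∈ S₂) :
    ¬ DifferentiableAt ℝ u x₀ := fun hdiff ↦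
  hne <| (hS₁.subset_of_differentiableAt hu hS₂ hx₁ hx₂ hdiff).antisymm
    (hS₂.subset_of_differentiableAt hu hS₁ hx₂ hx₁ hdiff)
end

section
/- Let u : ℝⁿ → ℝᵐ be 1-Lipschitz and let B(u) denote the set of points of ℝⁿ that belong to at least two distinct leaves of u. Then B(u) has Lebesgue measure zero. -/
/-!
If `x` lies on two distinct leaves, there are points `a`, `b` such that `u` preserves the
distances from `x` to `a` and to `b` but shrinks the distance from `a` to `b`. By strict convexity
of the target, a `1`-Lipschitz map is affine on every segment whose length it preserves, so a
derivative `D` of `u` at `x` would satisfy `D (a - x) = u a - u x`, `D (b - x) = u b - u x` and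
`‖D‖ ≤ 1`. In a Hilbert space, applying `‖D z‖ ≤ ‖z‖` to `z = (a - x) + (b - x)` shows that `D`
cannot decrease the inner product of `a - x` and `b - x`, hence `‖D (a - b)‖ ≥ ‖a - b‖`, a
contradiction. So `B(u)` consists of points where `u` is not differentiable, a null set by
Rademacher's theorem.
-/

open MeasureTheory

section

open AffineMap

variable {E F : Type*} [NormedAddCommGroup E] [NormedSpace ℝ E]
  [NormedAddCommGroup F] [NormedSpace ℝ F]

theorem LipschitzWith.apply_lineMap_of_dist_eq [StrictConvexSpace ℝ F] {u : E → F}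
    (hu : LipschitzWith 1 u) {x a : E} (h : dist (u x) (u a) = dist x a) {s : ℝ}
    (hs : s ∈ Set.Icc (0 : ℝ) 1) : u (lineMap x a s) = lineMap (u x) (u a) s := by
  have hx : dist (u x) (u (lineMap x a s)) ≤ s * dist x a := by
    simpa [dist_left_lineMap, abs_of_nonneg hs.1] using hu.dist_le_mul x (lineMap x a s)
  have ha : dist (u (lineMap x a s)) (u a) ≤ (1 - s) * dist x a := by
    simpa [dist_lineMap_right, abs_of_nonneg (sub_nonneg.2 hs.2)] using
      hu.dist_le_mul (lineMap x a s) a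
  have htri := dist_triangle (u x) (u (lineMap x a s)) (u a)
  apply eq_lineMap_of_dist_eq_mul_of_dist_eq_mul <;> rw [h] <;> linarith

theorem fderiv_apply_sub_of_apply_lineMap {u : E → F} {x a : E} (hd : DifferentiableAt ℝ u x)
    (h : ∀ s ∈ Set.Icc (0 : ℝ) 1, u (lineMap x a s) = lineMap (u x) (u a) s) :
    fderiv ℝ u x (a - x) = u a - u x := by
  have hcomp :
      HasDerivWithinAt (u ∘ (lineMap x a : ℝ → E)) (fderiv ℝ u x (a - x)) (Set.Icc 0 1) 0 := by
    have hD : HasFDerivAt u (fderiv ℝ u x) (lineMap x a (0 : ℝ)) := by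
      simpa using hd.hasFDerivAt
    exact (hD.comp_hasDerivAt 0 hasDerivAt_lineMap).hasDerivWithinAt
  have hline : HasDerivWithinAt (u ∘ (lineMap x a : ℝ → E)) (u a - u x) (Set.Icc 0 1) 0 :=
    hasDerivWithinAt_lineMap.congr h (h 0 ⟨le_rfl, zero_le_one⟩)
  exact (uniqueDiffOn_Icc_zero_one 0 ⟨le_rfl, zero_le_one⟩).eq_deriv _ hcomp hline

end

section

variable {E F : Type*} [NormedAddCommGroup E] [InnerProductSpace ℝ E]
  [NormedAddCommGroup F] [InnerProductSpace ℝ F]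

theorem ContinuousLinearMap.norm_map_sub_eq_of_norm_map_eq {D : E →L[ℝ] F} (hD : ‖D‖ ≤ 1)
    {v w : E} (hv : ‖D v‖ = ‖v‖) (hw : ‖D w‖ = ‖w‖) : ‖D v - D w‖ = ‖v - w‖ := by
  have hle : ∀ z, ‖D z‖ ≤ ‖z‖ := fun z => by simpa using D.le_of_opNorm_le hD z
  have hadd : ‖D v + D w‖ ^ 2 ≤ ‖v + w‖ ^ 2 := by
    rw [← map_add]; gcongr; exact hle _
  have hsq : ‖v - w‖ ^ 2 ≤ ‖D v - D w‖ ^ 2 := by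
    rw [norm_add_sq_real, norm_add_sq_real, hv, hw] at hadd
    rw [norm_sub_sq_real, norm_sub_sq_real, hv, hw]
    linarith
  refine le_antisymm (by simpa using hle (v - w)) ?_
  exact (pow_le_pow_iff_left₀ (norm_nonneg _) (norm_nonneg _) two_ne_zero).1 hsq

theorem LipschitzWith.not_differentiableAt_of_dist_eq {u : E → F} (hu : LipschitzWith 1 u)
    {x a b : E} (ha : dist (u x) (u a) = dist x a) (hb : dist (u x) (u b) = dist x b)
    (hab : dist (u a) (u b) < dist a b) : ¬ DifferentiableAt ℝ u x := by
  intro hd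
  have hDa := fderiv_apply_sub_of_apply_lineMap hd fun _ hs => hu.apply_lineMap_of_dist_eq ha hs
  have hDb := fderiv_apply_sub_of_apply_lineMap hd fun _ hs => hu.apply_lineMap_of_dist_eq hb hs
  have hD : ‖fderiv ℝ u x‖ ≤ 1 := by simpa using norm_fderiv_le_of_lipschitz ℝ hu
  have hiso := (fderiv ℝ u x).norm_map_sub_eq_of_norm_map_eq hD
    (by rw [hDa, ← dist_eq_norm', ha, dist_eq_norm'])
    (by rw [hDb, ← dist_eq_norm', hb, dist_eq_norm'])
  rw [hDa, hDb, sub_sub_sub_cancel_right, sub_sub_sub_cancel_right, ← dist_eq_norm,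
    ← dist_eq_norm] at hiso
  exact hab.ne hiso

end

theorem IsLeaf.not_differentiableAt_of_not_subset {n m : ℕ}
    {u : EuclideanSpace ℝ (Fin n) → EuclideanSpace ℝ (Fin m)} (hu : LipschitzWith 1 u)
    {S T : Set (EuclideanSpace ℝ (Fin n))} (hS : IsLeaf u S) (hT : IsLeaf u T)
    {x : EuclideanSpace ℝ (Fin n)} (hxS : x ∈ S) (hxT : x ∈ T) (hST : ¬ S ⊆ T) :
    ¬ DifferentiableAt ℝ u x := by
  obtain ⟨a, haS, haT⟩ := Set.not_subset.1 hST
  obtain ⟨b, hbT, hab⟩ := hT.2 a haT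
  refine hu.not_differentiableAt_of_dist_eq (a := a) (b := b) ?_ ?_ ?_
  · simpa only [dist_eq_norm] using hS.1 x hxS a haS
  · simpa only [dist_eq_norm] using hT.1 x hxT b hbT
  · simpa only [dist_eq_norm] using hab

/-- The set `B(u)` of points of `ℝⁿ` belonging to at least two distinct
leaves of a `1`-Lipschitz map `u : ℝⁿ → ℝᵐ` has Lebesgue measure zero. -/
theorem stmt_10 {n m : ℕ} (u : EuclideanSpace ℝ (Fin n) → EuclideanSpace ℝ (Fin m))
    (hu : LipschitzWith 1 u) :
    volume {x : EuclideanSpace ℝ (Fin n) |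
      ∃ S₁ S₂ : Set (EuclideanSpace ℝ (Fin n)),
        IsLeaf u S₁ ∧ IsLeaf u S₂ ∧ S₁ ≠ S₂ ∧ x ∈ S₁ ∧ x ∈ S₂} = 0 := by
  refine measure_mono_null ?_ (ae_iff.1 hu.ae_differentiableAt)
  rintro x ⟨S₁, S₂, h₁, h₂, hne, hx₁, hx₂⟩
  by_cases h : S₁ ⊆ S₂
  · exact h₂.not_differentiableAt_of_not_subset hu h₁ hx₂ hx₁ fun h' => hne (h.antisymm h')
  · exact h₁.not_differentiableAt_of_not_subset hu h₂ hx₁ hx₂ h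
end

section
/- Let m ≤ n, let u : ℝⁿ → ℝᵐ be Lipschitz, let s ∈ ℝᵐ and let S_s = {x ∈ ℝⁿ : u(x) = s}. Then the set S_s ∩ {x : u is differentiable at x and Du(x) has maximal rank m} admits a countable covering (S_s^i)_{i∈ℕ} by bounded Borel sets such that for each i there exist Lipschitz maps w : ℝⁿ → ℝ^{n−m} and v : ℝ^{n−m} → ℝⁿ with v(w(x)) = x for every x ∈ S_s^i. -/
/-!
Near a point `x` of the level set `{u = s}` where `L = Du(x)` is onto, the level set is close
to the affine space `x + ker L`, which has dimension `n - m`. Pick a linear `T : ℝⁿ → ℝ^{n-m}`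
injective on `ker L`; then `h ↦ (T h, L h)` is injective, so after rescaling `T`,
`‖h‖ ≤ ‖T h‖ + C ‖L h‖`. Since `‖L (y - x)‖ = o(‖y - x‖)` for `y` in the level set, this gives
`‖y - x‖ ≤ 2 ‖T' (y - x)‖` near `x` for every `T'` close to `T`. Hence the level set is covered
by countably many pieces, indexed by `T'` in a countable dense set of linear maps, a radius
`1/(j+1)` and a centre in a countable dense set, on each of which `T'` is injective with a
`2`-Lipschitz inverse. That inverse extends to a Lipschitz map on `ℝ^{n-m}` (finite-dimensional
Lipschitz extension); by continuity it remains a left inverse on the closure of the piece, which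
is Borel.
-/

open Set Metric Filter Module Topology

theorem exists_lipschitzWith_leftInvOn_of_dist_le_mul {α E : Type*} [PseudoMetricSpace α]
    [NormedAddCommGroup E] [NormedSpace ℝ E] [FiniteDimensional ℝ E]
    {w : E → α} {s : Set E} {K : NNReal}
    (h : ∀ x ∈ s, ∀ y ∈ s, dist x y ≤ K * dist (w x) (w y)) :
    ∃ v : α → E, LipschitzWith (lipschitzExtensionConstant E * K) v ∧ LeftInvOn v w s := by
  have hinj : InjOn w s := fun x hx y hy hxy ↦
    dist_le_zero.mp (by simpa [hxy] using h x hx y hy)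
  have hlip : LipschitzOnWith K (Function.invFunOn w s) (w '' s) := by
    refine LipschitzOnWith.of_dist_le_mul ?_
    rintro _ ⟨x, hx, rfl⟩ _ ⟨y, hy, rfl⟩
    rw [hinj.leftInvOn_invFunOn hx, hinj.leftInvOn_invFunOn hy]
    exact h x hx y hy
  obtain ⟨v, hv, hEq⟩ := hlip.extend_finite_dimension
  exact ⟨v, hv, fun x hx ↦ (hEq (mem_image_of_mem w hx)).symm.trans (hinj.leftInvOn_invFunOn hx)⟩

variable {E F G : Type*} [NormedAddCommGroup E] [NormedSpace ℝ E]
  [NormedAddCommGroup G] [NormedSpace ℝ G]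

theorem ContinuousLinearMap.exists_norm_le_norm_add_mul_norm [NormedAddCommGroup F]
    [NormedSpace ℝ F] [FiniteDimensional ℝ E] [FiniteDimensional ℝ G] (L : E →L[ℝ] F)
    (hL : finrank ℝ (LinearMap.ker (L : E →ₗ[ℝ] F)) ≤ finrank ℝ G) :
    ∃ (T : E →L[ℝ] G) (C : NNReal), ∀ h, ‖h‖ ≤ ‖T h‖ + C * ‖L h‖ := by
  obtain ⟨f, hf⟩ := finrank_le_iff_exists_linearMap.mp hL
  obtain ⟨g, hg⟩ := LinearMap.exists_extend f
  have hker : LinearMap.ker (g.prod (L : E →ₗ[ℝ] F)) = ⊥ := by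
    refine (Submodule.eq_bot_iff _).mpr fun h hh ↦ ?_
    obtain ⟨hgh, hLh⟩ := Prod.ext_iff.mp hh
    have : f ⟨h, hLh⟩ = 0 := by rw [← hg]; exact hgh
    exact congrArg Subtype.val (hf (this.trans (map_zero f).symm))
  obtain ⟨C, -, hC⟩ := (g.prod (L : E →ₗ[ℝ] F)).exists_antilipschitzWith hker
  refine ⟨C • LinearMap.toContinuousLinearMap g, C, fun h ↦ ?_⟩
  calc ‖h‖ ≤ C * ‖(g h, L h)‖ := by simpa [Prod.dist_eq] using hC.le_mul_dist h 0
    _ ≤ C * (‖g h‖ + ‖L h‖) := by gcongr; exact max_le_add_of_nonneg (norm_nonneg _) (norm_nonneg _)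
    _ = ‖(C • LinearMap.toContinuousLinearMap g) h‖ + C * ‖L h‖ := by
        simp [NNReal.smul_def, norm_smul, mul_add]

theorem HasFDerivAt.eventually_norm_sub_le_two_mul_of_eq [NormedAddCommGroup F]
    [NormedSpace ℝ F] {u : E → F} {L : E →L[ℝ] F} {x : E}
    (hu : HasFDerivAt u L x) {T : E →L[ℝ] G} {C : NNReal}
    (hT : ∀ h, ‖h‖ ≤ ‖T h‖ + C * ‖L h‖) :
    ∀ᶠ y in 𝓝 x, u y = u x → ∀ T' : E →L[ℝ] G, ‖T' - T‖ ≤ 1 / 4 →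
      ‖y - x‖ ≤ 2 * ‖T' (y - x)‖ := by
  have hε : (0 : ℝ) < 1 / (4 * C + 1) := by positivity
  filter_upwards [hu.isLittleO.def hε] with y hy hyx T' hT'
  set h := y - x
  have hLh : ‖L h‖ ≤ 1 / (4 * C + 1) * ‖h‖ := by simpa [hyx] using hy
  have hCL : C * ‖L h‖ ≤ ‖h‖ / 4 := by
    calc (C : ℝ) * ‖L h‖ ≤ C * (1 / (4 * C + 1) * ‖h‖) := by gcongr
      _ = C / (4 * C + 1) * ‖h‖ := by ring
      _ ≤ 1 / 4 * ‖h‖ := by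
        gcongr ?_ * _
        rw [div_le_iff₀ (by positivity)]
        linarith
      _ = ‖h‖ / 4 := by ring
  have hTh : ‖T h‖ ≤ ‖T' h‖ + ‖h‖ / 4 := by
    calc ‖T h‖ ≤ ‖T' h‖ + ‖(T' - T) h‖ := by
          simpa using norm_sub_le (T' h) ((T' - T) h)
      _ ≤ ‖T' h‖ + ‖h‖ / 4 := by
          gcongr
          calc ‖(T' - T) h‖ ≤ ‖T' - T‖ * ‖h‖ := (T' - T).le_opNorm h
            _ ≤ 1 / 4 * ‖h‖ := by gcongr
            _ = ‖h‖ / 4 := by ring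
  linarith [hT h]

variable (u : E → F) (s : F) (T : E →L[ℝ] G) (r : ℝ) (z : E)

def levelPiece : Set E :=
  {x ∈ closedBall z r | u x = s ∧
    ∀ y, u y = s → dist y x ≤ 2 * r → ‖y - x‖ ≤ 2 * ‖T (y - x)‖}

theorem dist_le_two_mul_dist_of_mem_levelPiece {x y : E} (hx : x ∈ levelPiece u s T r z)
    (hy : y ∈ levelPiece u s T r z) : dist y x ≤ 2 * dist (T y) (T x) := by
  obtain ⟨hxz, -, hx⟩ := hx
  obtain ⟨hyz, hys, -⟩ := hy
  have hyx : dist y x ≤ 2 * r := by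
    linarith [dist_triangle_right y x z, mem_closedBall.mp hxz, mem_closedBall.mp hyz]
  simpa [dist_eq_norm, ← map_sub] using hx y hys hyx

theorem exists_lipschitzWith_leftInvOn_closure_levelPiece [FiniteDimensional ℝ E] :
    ∃ v : G → E, (∃ K, LipschitzWith K v) ∧ LeftInvOn v T (closure (levelPiece u s T r z)) := by
  obtain ⟨v, hv, hinv⟩ := exists_lipschitzWith_leftInvOn_of_dist_le_mul (K := 2) (w := T)
    fun x hx y hy ↦ by exact_mod_cast dist_le_two_mul_dist_of_mem_levelPiece u s T r z hy hx
  exact ⟨v, ⟨_, hv⟩, EqOn.closure hinv (hv.continuous.comp T.continuous) continuous_id⟩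

theorem exists_mem_levelPiece [NormedAddCommGroup F] [NormedSpace ℝ F] [FiniteDimensional ℝ E]
    [FiniteDimensional ℝ G] {D : Set (E →L[ℝ] G)} (hD : Dense D) {Z : Set E} (hZ : Dense Z)
    {x : E} {L : E →L[ℝ] F} (hu : HasFDerivAt u L x)
    (hL : finrank ℝ (LinearMap.ker (L : E →ₗ[ℝ] F)) ≤ finrank ℝ G) :
    ∃ T ∈ D, ∃ j : ℕ, ∃ z ∈ Z, x ∈ levelPiece u (u x) T (1 / ((j : ℝ) + 1)) z := by
  obtain ⟨T₀, C, hT₀⟩ := L.exists_norm_le_norm_add_mul_norm hL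
  obtain ⟨δ, hδ, hnear⟩ :=
    Metric.eventually_nhds_iff.mp (hu.eventually_norm_sub_le_two_mul_of_eq hT₀)
  obtain ⟨j, hj⟩ := exists_nat_one_div_lt (half_pos hδ)
  obtain ⟨T, hTD, hT⟩ := hD.exists_dist_lt T₀ (by norm_num : (0 : ℝ) < 1 / 4)
  obtain ⟨z, hzZ, hz⟩ := hZ.exists_dist_lt x (Nat.one_div_pos_of_nat (α := ℝ) (n := j))
  refine ⟨T, hTD, j, z, hzZ, ⟨mem_closedBall.mpr hz.le, rfl, fun y hy hyx ↦ ?_⟩⟩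
  exact hnear (by linarith) hy T (by rw [← dist_eq_norm, dist_comm]; exact hT.le)

theorem stmt_11_general {n m : ℕ}
    (u : EuclideanSpace ℝ (Fin n) → EuclideanSpace ℝ (Fin m))
    (s : EuclideanSpace ℝ (Fin m)) :
    ∃ C : ℕ → Set (EuclideanSpace ℝ (Fin n)),
      ({x | u x = s} ∩
          {x | DifferentiableAt ℝ u x ∧ LinearMap.range (fderiv ℝ u x).toLinearMap = ⊤} ⊆
        ⋃ i, C i) ∧
      ∀ i, MeasurableSet (C i) ∧ Bornology.IsBounded (C i) ∧
        ∃ w : EuclideanSpace ℝ (Fin n) → EuclideanSpace ℝ (Fin (n - m)),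
        ∃ v : EuclideanSpace ℝ (Fin (n - m)) → EuclideanSpace ℝ (Fin n),
          (∃ Kw : NNReal, LipschitzWith Kw w) ∧
          (∃ Kv : NNReal, LipschitzWith Kv v) ∧
          ∀ x ∈ C i, v (w x) = x := by
  obtain ⟨D, hDc, hD⟩ := TopologicalSpace.exists_countable_dense
    (EuclideanSpace ℝ (Fin n) →L[ℝ] EuclideanSpace ℝ (Fin (n - m)))
  obtain ⟨Z, hZc, hZ⟩ := TopologicalSpace.exists_countable_dense (EuclideanSpace ℝ (Fin n))
  have := hDc.to_subtype
  have := hZc.to_subtype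
  have := hD.nonempty.to_subtype
  have := hZ.nonempty.to_subtype
  obtain ⟨f, hf⟩ := exists_surjective_nat (D × ℕ × Z)
  let piece (i : ℕ) := levelPiece u s (f i).1.1 (1 / (((f i).2.1 : ℝ) + 1)) (f i).2.2.1
  refine ⟨fun i ↦ closure (piece i), ?_, fun i ↦ ⟨isClosed_closure.measurableSet,
    (isBounded_closedBall.subset (sep_subset _ _)).closure, ?_⟩⟩
  · rintro x ⟨rfl, hdiff, hrank⟩
    have hker : finrank ℝ (LinearMap.ker (fderiv ℝ u x).toLinearMap) ≤
        finrank ℝ (EuclideanSpace ℝ (Fin (n - m))) := by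
      have := LinearMap.finrank_range_add_finrank_ker (fderiv ℝ u x).toLinearMap
      rw [hrank, finrank_top] at this
      simp only [finrank_euclideanSpace_fin] at this ⊢
      omega
    obtain ⟨T, hT, j, z, hz, hx⟩ := exists_mem_levelPiece u hD hZ hdiff.hasFDerivAt hker
    obtain ⟨i, hi⟩ := hf (⟨T, hT⟩, j, ⟨z, hz⟩)
    exact mem_iUnion.mpr ⟨i, subset_closure (by simpa [piece, hi] using hx)⟩
  · obtain ⟨v, hv, hinv⟩ := exists_lipschitzWith_leftInvOn_closure_levelPiece u s (f i).1.1
      (1 / (((f i).2.1 : ℝ) + 1)) (f i).2.2.1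
    exact ⟨(f i).1.1, v, ⟨_, (f i).1.1.lipschitz⟩, hv, fun x hx ↦ hinv hx⟩

/-- Let `m ≤ n`, let `u : ℝⁿ → ℝᵐ` be Lipschitz, and let
`S_s = {x : u x = s}` be a level set.  Then the portion of `S_s` consisting of points
where `u` is differentiable with derivative of maximal rank `m` admits a countable
covering by bounded Borel sets `S_s^i` such that for each `i` there are Lipschitz maps
`w : ℝⁿ → ℝ^{n−m}` and `v : ℝ^{n−m} → ℝⁿ` with `v (w x) = x` for every `x ∈ S_s^i`. -/
theorem stmt_11 {n m : ℕ} (hmn : m ≤ n)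
    (u : EuclideanSpace ℝ (Fin n) → EuclideanSpace ℝ (Fin m))
    (K : NNReal) (hu : LipschitzWith K u) (s : EuclideanSpace ℝ (Fin m)) :
    ∃ C : ℕ → Set (EuclideanSpace ℝ (Fin n)),
      ({x | u x = s} ∩
          {x | DifferentiableAt ℝ u x ∧ LinearMap.range (fderiv ℝ u x).toLinearMap = ⊤} ⊆
        ⋃ i, C i) ∧
      ∀ i, MeasurableSet (C i) ∧ Bornology.IsBounded (C i) ∧
        ∃ w : EuclideanSpace ℝ (Fin n) → EuclideanSpace ℝ (Fin (n - m)),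
        ∃ v : EuclideanSpace ℝ (Fin (n - m)) → EuclideanSpace ℝ (Fin n),
          (∃ Kw : NNReal, LipschitzWith Kw w) ∧
          (∃ Kv : NNReal, LipschitzWith Kv v) ∧
          ∀ x ∈ C i, v (w x) = x :=
  stmt_11_general u s
end

section
/- Let u : ℝⁿ → ℝᵐ be 1-Lipschitz and let k ∈ {1,…,m}. Define α_k : ℝⁿ → ℝ ∪ {∞} by α_k(x) = sup{ r ≥ 0 : there exist a k-dimensional linear subspace V ⊆ ℝⁿ and a linear isometry T : V → ℝᵐ such that u(x) − u(y) = T(x − y) for all y ∈ (x + V) ∩ B(x, r) }. Then α_k is upper semicontinuous on ℝⁿ. -/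
/-!
Reparametrise the `k`-plane `V` by a linear isometry `A : ℝᵏ → ℝⁿ` and replace `T` by
`B = T ∘ A`. Then "`r` is an admissible radius at `x`" becomes the existence of a pair `(A, B)`
of isometric embeddings, which lies in the compact unit ball of operators, satisfying conditions
that are closed in `(x, A, B)`. Projecting along a compact factor preserves closedness, so for
each `r` the set of points where `r` is admissible is closed, and a supremum of down-closed
families with closed superlevel sets is upper semicontinuous.
-/

open scoped ENNReal
open Module Set

noncomputable def alphaK {n m : ℕ}
    (u : EuclideanSpace ℝ (Fin n) → EuclideanSpace ℝ (Fin m)) (k : ℕ)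
    (x : EuclideanSpace ℝ (Fin n)) : ℝ≥0∞ :=
  sSup {r : ℝ≥0∞ | ∃ V : Submodule ℝ (EuclideanSpace ℝ (Fin n)),
    Module.finrank ℝ V = k ∧
    ∃ T : EuclideanSpace ℝ (Fin n) →L[ℝ] EuclideanSpace ℝ (Fin m),
      (∀ v ∈ V, ‖T v‖ = ‖v‖) ∧
      ∀ y : EuclideanSpace ℝ (Fin n), y - x ∈ V → edist y x ≤ r →
        u x - u y = T (x - y)}

theorem upperSemicontinuous_sSup_of_isClosed {X α : Type*} [TopologicalSpace X]
    [CompleteLinearOrder α] [DenselyOrdered α] {S : X → Set α} (hS : ∀ x, IsLowerSet (S x))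
    (hclosed : ∀ r, IsClosed {x | r ∈ S x}) : UpperSemicontinuous fun x => sSup (S x) := by
  intro x₀ c hc
  obtain ⟨s, hs, hsc⟩ := exists_between hc
  have hs₀ : s ∉ S x₀ := fun h => (le_sSup h).not_gt hs
  filter_upwards [(hclosed s).isOpen_compl.mem_nhds hs₀] with x hx
  refine lt_of_le_of_lt (sSup_le fun t ht => ?_) hsc
  by_contra! hst
  exact hx (hS x hst.le ht)

theorem IsClosed.image_fst_of_subset_prod_isCompact {X Y : Type*} [TopologicalSpace X]
    [TopologicalSpace Y] {S : Set (X × Y)} {K : Set Y} (hS : IsClosed S) (hK : IsCompact K)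
    (hSK : S ⊆ univ ×ˢ K) : IsClosed (Prod.fst '' S) := by
  have : CompactSpace K := isCompact_iff_compactSpace.mp hK
  have hS' : IsClosed (Prod.map id (↑) ⁻¹' S : Set (X × K)) :=
    hS.preimage (continuous_id.prodMap continuous_subtype_val)
  convert isClosedMap_fst_of_compactSpace _ hS' using 1
  ext x
  constructor
  · rintro ⟨⟨x, y⟩, hxy, rfl⟩
    exact ⟨(x, ⟨y, (hSK hxy).2⟩), hxy, rfl⟩
  · rintro ⟨⟨x, y⟩, hxy, rfl⟩
    exact ⟨(x, y), hxy, rfl⟩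

section NormedSpace

variable {E F : Type*} [NormedAddCommGroup E] [NormedSpace ℝ E]
  [NormedAddCommGroup F] [NormedSpace ℝ F] {k : ℕ}

def alphaSet (u : E → F) (k : ℕ) (x : E) : Set ℝ≥0∞ :=
  {r | ∃ V : Submodule ℝ E, finrank ℝ V = k ∧ ∃ T : E →L[ℝ] F,
    (∀ v ∈ V, ‖T v‖ = ‖v‖) ∧ ∀ y, y - x ∈ V → edist y x ≤ r → u x - u y = T (x - y)}

theorem isLowerSet_alphaSet (u : E → F) (x : E) : IsLowerSet (alphaSet u k x) := by
  rintro r r' hr' ⟨V, hV, T, hT, hu⟩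
  exact ⟨V, hV, T, hT, fun y hy hyx => hu y hy (hyx.trans hr')⟩

/-- `p = (A, B)` encodes the plane `V = range A` and the isometry `T` with `T ∘ A = B`. -/
def IsometricAlong (u : E → F) (x : E) (r : ℝ≥0∞)
    (p : (EuclideanSpace ℝ (Fin k) →L[ℝ] E) × (EuclideanSpace ℝ (Fin k) →L[ℝ] F)) : Prop :=
  (∀ c, ‖p.1 c‖ = ‖c‖) ∧ (∀ c, ‖p.2 c‖ = ‖c‖) ∧ ∀ c, ‖c‖ₑ ≤ r → u (x + p.1 c) = u x + p.2 c

theorem IsometricAlong.mem_closedBall {u : E → F} {x : E} {r : ℝ≥0∞}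
    {p : (EuclideanSpace ℝ (Fin k) →L[ℝ] E) × (EuclideanSpace ℝ (Fin k) →L[ℝ] F)}
    (hp : IsometricAlong u x r p) : p ∈ Metric.closedBall 0 1 := by
  rw [mem_closedBall_zero_iff, Prod.norm_def]
  exact max_le (p.1.opNorm_le_bound zero_le_one fun c => by rw [hp.1, one_mul])
    (p.2.opNorm_le_bound zero_le_one fun c => by rw [hp.2.1, one_mul])

theorem isClosed_setOf_isometricAlong {u : E → F} (hu : Continuous u) (r : ℝ≥0∞) :
    IsClosed {q : E × (EuclideanSpace ℝ (Fin k) →L[ℝ] E) × (EuclideanSpace ℝ (Fin k) →L[ℝ] F) |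
      IsometricAlong u q.1 r q.2} := by
  simp only [IsometricAlong, ofPred_and, ofPred_forall]
  exact (isClosed_iInter fun c => isClosed_eq (by fun_prop) (by fun_prop)).inter
    ((isClosed_iInter fun c => isClosed_eq (by fun_prop) (by fun_prop)).inter
      (isClosed_iInter fun c => isClosed_iInter fun _ => isClosed_eq (by fun_prop) (by fun_prop)))

end NormedSpace

section InnerProductSpace

variable {E F : Type*} [NormedAddCommGroup E] [InnerProductSpace ℝ E] [FiniteDimensional ℝ E]
  [NormedAddCommGroup F] [NormedSpace ℝ F] {k : ℕ}

theorem mem_alphaSet_iff {u : E → F} {x : E} {r : ℝ≥0∞} :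
    r ∈ alphaSet u k x ↔ ∃ p, IsometricAlong (k := k) u x r p := by
  constructor
  · rintro ⟨V, hV, T, hT, hu⟩
    let b : OrthonormalBasis (Fin k) ℝ V := (stdOrthonormalBasis ℝ V).reindex (finCongr hV)
    let ι : EuclideanSpace ℝ (Fin k) →ₗᵢ[ℝ] E := V.subtypeₗᵢ.comp b.repr.symm.toLinearIsometry
    have hιV : ∀ c, ι c ∈ V := fun c => (b.repr.symm c).2
    refine ⟨(ι.toContinuousLinearMap, T.comp ι.toContinuousLinearMap), ι.norm_map,
      fun c => (hT _ (hιV c)).trans (ι.norm_map c), fun c hc => ?_⟩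
    have h := hu (x + ι c) (by simpa using hιV c)
      (by rwa [edist_eq_enorm_sub, add_sub_cancel_left, ι.enorm_map])
    rw [sub_add_cancel_left, map_neg, ← neg_sub, neg_inj] at h
    simp only [ContinuousLinearMap.comp_apply, LinearIsometry.coe_toContinuousLinearMap, ← h]
    abel
  · rintro ⟨⟨A, B⟩, hA, hB, hu⟩
    dsimp only at hA hB hu
    have hAA : ∀ c, A.adjoint (A c) = c := fun c => by
      simpa using DFunLike.congr_fun (A.norm_map_iff_adjoint_comp_self.mp hA) c
    let ι : EuclideanSpace ℝ (Fin k) →ₗᵢ[ℝ] E := { toLinearMap := A, norm_map' := hA }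
    refine ⟨LinearMap.range (A : EuclideanSpace ℝ (Fin k) →ₗ[ℝ] E), ?_, B ∘L A.adjoint, ?_, ?_⟩
    · rw [LinearMap.finrank_range_of_inj ι.injective, finrank_euclideanSpace_fin]
    · rintro _ ⟨c, rfl⟩
      simp [hAA, hA, hB]
    · rintro y ⟨c, hc⟩ hy
      obtain rfl : y = x + A c := eq_add_of_sub_eq' hc.symm
      rw [edist_eq_enorm_sub, add_sub_cancel_left, enorm_eq_iff_norm_eq.mpr (hA c)] at hy
      simp [hu c hy, hAA]

theorem isClosed_setOf_mem_alphaSet [FiniteDimensional ℝ F] {u : E → F} (hu : Continuous u)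
    (r : ℝ≥0∞) : IsClosed {x | r ∈ alphaSet u k x} := by
  have h : {x | r ∈ alphaSet u k x} = Prod.fst '' {q | IsometricAlong (k := k) u q.1 r q.2} := by
    ext x
    simp [mem_alphaSet_iff]
  rw [h]
  exact (isClosed_setOf_isometricAlong hu r).image_fst_of_subset_prod_isCompact
    (isCompact_closedBall 0 1) fun q hq => ⟨trivial, hq.mem_closedBall⟩

end InnerProductSpace

theorem stmt_12_general {n m : ℕ} (u : EuclideanSpace ℝ (Fin n) → EuclideanSpace ℝ (Fin m))
    (hu : LipschitzWith 1 u) (k : ℕ) :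
    UpperSemicontinuous (alphaK u k) :=
  upperSemicontinuous_sSup_of_isClosed (isLowerSet_alphaSet u)
    (isClosed_setOf_mem_alphaSet hu.continuous)

/-- For a `1`-Lipschitz map `u : ℝⁿ → ℝᵐ` and `k ∈ {1, …, m}`, the
function `α_k` is upper semicontinuous on `ℝⁿ`. -/
theorem stmt_12 {n m : ℕ} (u : EuclideanSpace ℝ (Fin n) → EuclideanSpace ℝ (Fin m))
    (hu : LipschitzWith 1 u) (k : ℕ) (hk1 : 1 ≤ k) (hkm : k ≤ m) :
    UpperSemicontinuous (alphaK u k) :=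
  stmt_12_general u hu k
end
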